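/- arXiv:1110.6563 — 11 statements merged into one kernel-verified Lean document; each statement's English description precedes it below -/
import Mathlib

section
/- Every chordal graph is perfect: if G = (V,E) is a graph containing no induced cycle of length at least 4, then χ(G_X) = ω(G_X) for every finite X ⊆ V. -/
open Cardinal SimpleGraph

universe u

/-- A set of vertices is an anticlique (independent set) if its elements are
pairwise non-adjacent. -/
def IsAnticlique {V : Type u} (G : SimpleGraph V) (s : Set V) : Prop :=
  s.Pairwise fun u v => ¬ G.Adj u v

/-- The clique number: the supremum of the cardinalities of cliques. -/
noncomputable def cardCliqueNum {V : Type u} (G : SimpleGraph V) : Cardinal.{u} :=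
  ⨆ s : {s : Set V // G.IsClique s}, #s.1

/-- The chromatic number: the smallest cardinality of a cover of the vertex set
by anticliques. -/
noncomputable def cardChromNum {V : Type u} (G : SimpleGraph V) : Cardinal.{u} :=
  sInf {κ | ∃ P : Set (Set V), (∀ s ∈ P, IsAnticlique G s) ∧ ⋃₀ P = Set.univ ∧ #P = κ}

/-- A graph is chordal if it contains no induced cycle of length at least `4`. -/
def Chordal {V : Type u} (G : SimpleGraph V) : Prop :=
  ∀ n : ℕ, 4 ≤ n → IsEmpty (cycleGraph n ↪g G)

/-!
A finite chordal graph has a simplicial vertex, one whose neighbourhood is a clique. Deleting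
it, colouring the rest inductively and giving it a colour missing from its neighbourhood never
needs more colours than the largest clique, because the vertex and its neighbourhood form a
clique.

Existence of simplicial vertices (Dirac) is proved in the stronger form "complete, or two
non-adjacent simplicial vertices", by induction. For non-adjacent `a` and `b`, let `C` be the
component of `b` once `a` and its neighbours are deleted, and `S` the set of neighbours of `a`
with a neighbour in `C`. Two non-adjacent `x, y ∈ S` would close, through `a` and a shortest
`x`–`y` path via `C`, an induced cycle of length at least `4`. So `S` is a clique separating `C`
from `a`, and the induction hypothesis, applied to `C ∪ S` and to the complement of `C`, yields a
simplicial vertex on each side.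
-/

section

variable {V : Type u} {G : SimpleGraph V}

namespace SimpleGraph

theorem Walk.dist_getVert_getVert_of_length_eq_dist {x y : V} {p : G.Walk x y}
    (hp : p.length = G.dist x y) {i j : ℕ} (hij : i ≤ j) (hj : j ≤ p.length) :
    G.dist (p.getVert i) (p.getVert j) = j - i := by
  have hsub : ((p.drop i).take (j - i)).IsSubwalk p :=
    (Walk.isSubwalk_take _ _).trans (Walk.isSubwalk_drop _ _)
  have := length_eq_dist_of_subwalk hp hsub
  rw [Walk.take_length, Walk.drop_length, Walk.drop_getVert, Nat.add_sub_cancel' hij] at this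
  omega

theorem Walk.adj_getVert_iff_of_length_eq_dist {x y : V} {p : G.Walk x y}
    (hp : p.length = G.dist x y) {i j : ℕ} (hij : i ≤ j) (hj : j ≤ p.length) :
    G.Adj (p.getVert i) (p.getVert j) ↔ j = i + 1 := by
  rw [← dist_eq_one_iff_adj, p.dist_getVert_getVert_of_length_eq_dist hp hij hj]
  omega

theorem cycleGraph_adj_iff_val {N : ℕ} (hN : 2 ≤ N) {i j : Fin N} :
    (cycleGraph N).Adj i j ↔ i.val + 1 = j.val ∨ j.val + 1 = i.val ∨
      (i.val = 0 ∧ j.val + 1 = N) ∨ (j.val = 0 ∧ i.val + 1 = N) := by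
  rw [cycleGraph_adj']
  grind [Fin.coe_sub_iff_le, Fin.coe_sub_iff_lt]

theorem nonempty_cycleGraph_embedding_of_adj_iff {N : ℕ} (hN : 2 ≤ N) (f : ℕ → V)
    (hf : ∀ i < N, ∀ j < N, f i = f j → i = j)
    (hadj : ∀ i j, i < j → j < N → (G.Adj (f i) (f j) ↔ j = i + 1 ∨ (i = 0 ∧ j + 1 = N))) :
    Nonempty (cycleGraph N ↪g G) := by
  refine ⟨⟨⟨fun i => f i, fun i j hij => Fin.ext (hf i i.2 j j.2 hij)⟩, fun {i j} => ?_⟩⟩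
  change G.Adj (f i) (f j) ↔ _
  rw [cycleGraph_adj_iff_val hN]
  rcases lt_trichotomy i.val j.val with h | h | h
  · rw [hadj i j h j.2]; omega
  · simp [Fin.ext h]; omega
  · rw [adj_comm, hadj j i h i.2]; omega

def IsSimplicialIn (G : SimpleGraph V) (s : Set V) (v : V) : Prop :=
  G.IsClique (G.neighborSet v ∩ s)

def HasTwoNonadjSimplicial (G : SimpleGraph V) (s : Set V) : Prop :=
  ∃ v ∈ s, ∃ w ∈ s, v ≠ w ∧ ¬ G.Adj v w ∧ G.IsSimplicialIn s v ∧ G.IsSimplicialIn s w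

theorem exists_isSimplicialIn_diff {s T S : Set V}
    (hT : G.IsClique T ∨ G.HasTwoNonadjSimplicial T) (hS : G.IsClique S)
    (hTS : (T \ S).Nonempty) (hnbr : ∀ v ∈ T \ S, G.neighborSet v ∩ s ⊆ T) :
    ∃ v ∈ T \ S, G.IsSimplicialIn s v := by
  have hlift : ∀ v ∈ T \ S, G.IsSimplicialIn T v → G.IsSimplicialIn s v :=
    fun v hv => IsClique.subset fun w hw => ⟨hw.1, hnbr v hv hw⟩
  rcases hT with hT | ⟨v, hv, w, hw, hvw, hnadj, hsv, hsw⟩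
  · obtain ⟨v, hv⟩ := hTS
    exact ⟨v, hv, hlift v hv (hT.subset Set.inter_subset_right)⟩
  · by_cases hvS : v ∈ S
    · have hwS : w ∉ S := fun hwS => hnadj (hS hvS hwS hvw)
      exact ⟨w, ⟨hw, hwS⟩, hlift w ⟨hw, hwS⟩ hsw⟩
    · exact ⟨v, ⟨hv, hvS⟩, hlift v ⟨hv, hvS⟩ hsv⟩

theorem exists_induce_component (D : Finset V) {b : V} (hb : b ∈ D) :
    ∃ C ⊆ D, b ∈ C ∧ (G.induce (C : Set V)).Preconnected ∧
      ∀ c ∈ C, ∀ u ∈ D, G.Adj c u → u ∈ C := by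
  classical
  obtain ⟨C, hCmax⟩ := (D.powerset.filter
    fun C : Finset V => b ∈ C ∧ (G.induce (C : Set V)).Preconnected).exists_maximal
    ⟨({b} : Finset V), by simpa [hb] using Preconnected.of_subsingleton⟩
  simp only [Finset.mem_filter, Finset.mem_powerset] at hCmax
  obtain ⟨⟨hCD, hbC, hC⟩, hmax⟩ := hCmax
  refine ⟨C, hCD, hbC, hC, fun c hc u hu hcu => ?_⟩
  have hins : (G.induce (insert u C : Finset V)).Preconnected := by
    rw [Finset.coe_insert, Set.insert_eq]
    exact (connected_induce_union (Preconnected.of_subsingleton (G := G.induce {u})) hC rfl hc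
      hcu.symm).preconnected
  exact hmax ⟨Finset.insert_subset hu hCD, Finset.mem_insert_of_mem hbC, hins⟩
    (Finset.subset_insert u C) (Finset.mem_insert_self u C)

end SimpleGraph

theorem Chordal.comap {W : Type*} {H : SimpleGraph W} (f : H ↪g G) (hG : Chordal G) :
    Chordal H :=
  fun n hn => ⟨fun e => (hG n hn).false (f.comp e)⟩

theorem Chordal.adj_of_induce_reachable (hG : Chordal G) {U : Set V} {a x y : V}
    (hx : x ∈ U) (hy : y ∈ U) (haU : a ∉ U) (hax : G.Adj a x) (hay : G.Adj a y)
    (hU : ∀ v ∈ U, G.Adj a v → v = x ∨ v = y) (hxy : x ≠ y)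
    (hreach : (G.induce U).Reachable ⟨x, hx⟩ ⟨y, hy⟩) : G.Adj x y := by
  by_contra hnadj
  obtain ⟨p, hp⟩ := hreach.exists_walk_length_eq_dist
  set m := p.length
  have hm : 1 < m := hp ▸ hreach.one_lt_dist_of_ne_of_not_adj (by simpa using hxy) hnadj
  have hinj : ∀ i ≤ m, ∀ j ≤ m, (p.getVert i : V) = p.getVert j → i = j :=
    fun i hi j hj h => (p.isPath_of_length_eq_dist hp).getVert_injOn hi hj (Subtype.ext h)
  have hadj : ∀ i j, i ≤ j → j ≤ m → (G.Adj (p.getVert i) (p.getVert j) ↔ j = i + 1) :=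
    fun i j hij hj => p.adj_getVert_iff_of_length_eq_dist hp hij hj
  have hapex : ∀ i ≤ m, (G.Adj a (p.getVert i) ↔ i = 0 ∨ i = m) := by
    intro i hi
    refine ⟨fun h => ?_, ?_⟩
    · rcases hU _ (p.getVert i).2 h with h' | h'
      · exact .inl (hinj i hi 0 (Nat.zero_le _) (by simpa using h'))
      · exact .inr (hinj i hi m le_rfl (by simpa [m] using h'))
    · rintro (rfl | rfl)
      · simpa using hax
      · simpa [m] using hay
  -- the shortest path from `x` to `y`, closed up through `a` into an induced cycle
  let f : ℕ → V := fun i => if i ≤ m then p.getVert i else a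
  refine (hG (m + 2) (by omega)).false
    (nonempty_cycleGraph_embedding_of_adj_iff (by omega) f ?_ ?_).some
  · intro i hi j hj hij
    simp only [f] at hij
    split_ifs at hij with h1 h2 h2
    · exact hinj i h1 j h2 hij
    · exact absurd (hij ▸ (p.getVert i).2) haU
    · exact absurd (hij ▸ (p.getVert j).2) haU
    · omega
  · intro i j hij hj
    simp only [f]
    split_ifs with h1 h2
    · rw [hadj i j hij.le h2]; omega
    · rw [adj_comm, hapex i h1]; omega
    all_goals omega

theorem Chordal.isClique_of_induce_preconnected (hG : Chordal G) {a : V} {C : Set V}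
    (hC : (G.induce C).Preconnected) (haC : a ∉ C) (hC_nadj : ∀ c ∈ C, ¬ G.Adj a c) :
    G.IsClique {x | G.Adj a x ∧ ∃ c ∈ C, G.Adj x c} := by
  rintro x ⟨hax, c, hc, hxc⟩ y ⟨hay, d, hd, hyd⟩ hxy
  have hsingle : ∀ v : V, (G.induce {v}).Preconnected := fun _ => .of_subsingleton
  have hconn := connected_induce_union
    (connected_induce_union (hsingle x) hC rfl hc hxc).preconnected (hsingle y)
    (Or.inr hd) rfl hyd.symm
  refine hG.adj_of_induce_reachable (.inl (.inl rfl)) (.inr rfl) ?_ hax hay ?_ hxy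
    (hconn.preconnected _ _)
  · rintro ((rfl | h) | rfl)
    exacts [G.irrefl hax, haC h, G.irrefl hay]
  · rintro v ((rfl | hv) | rfl) hav
    exacts [.inl rfl, absurd hav (hC_nadj v hv), .inr rfl]

theorem Chordal.exists_clique_separator [DecidableEq V] (hG : Chordal G) {s : Finset V} {a b : V}
    (ha : a ∈ s) (hb : b ∈ s) (hab : a ≠ b) (hnadj : ¬ G.Adj a b) :
    ∃ C S : Finset V, C ∪ S ⊆ s ∧ Disjoint C S ∧ b ∈ C ∧ a ∉ C ∪ S ∧
      G.IsClique (S : Set V) ∧ ∀ c ∈ C, G.neighborSet c ∩ s ⊆ ↑(C ∪ S) := by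
  classical
  obtain ⟨C, hCD, hbC, hC, hCclosed⟩ :=
    exists_induce_component (G := G) (s.filter fun v => v ≠ a ∧ ¬ G.Adj a v)
      (Finset.mem_filter.2 ⟨hb, hab.symm, hnadj⟩)
  have hCs : ∀ c ∈ C, c ∈ s ∧ c ≠ a ∧ ¬ G.Adj a c := fun c hc => Finset.mem_filter.1 (hCD hc)
  set S := s.filter fun x => G.Adj a x ∧ ∃ c ∈ C, G.Adj x c
  have hS : G.IsClique (S : Set V) :=
    (hG.isClique_of_induce_preconnected hC (fun h => (hCs a h).2.1 rfl)
      fun c hc => (hCs c hc).2.2).subset fun x hx => (Finset.mem_filter.1 hx).2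
  refine ⟨C, S, Finset.union_subset (fun c hc => (hCs c hc).1) (Finset.filter_subset _ _),
    Finset.disjoint_left.2 fun c hc hcS => (hCs c hc).2.2 (Finset.mem_filter.1 hcS).2.1, hbC,
    ?_, hS, ?_⟩
  · rw [Finset.mem_union, not_or]
    exact ⟨fun h => (hCs a h).2.1 rfl, fun h => G.irrefl (Finset.mem_filter.1 h).2.1⟩
  · rintro c hc u ⟨hcu, hu⟩
    by_cases hau : G.Adj a u
    · exact Finset.mem_union_right _ (Finset.mem_filter.2 ⟨hu, hau, c, hc, hcu.symm⟩)
    · refine Finset.mem_union_left _ (hCclosed c hc u (Finset.mem_filter.2 ⟨hu, ?_, hau⟩) hcu)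
      rintro rfl
      exact (hCs c hc).2.2 hcu.symm

theorem Chordal.isClique_or_hasTwoNonadjSimplicial (hG : Chordal G) (s : Finset V) :
    G.IsClique (s : Set V) ∨ G.HasTwoNonadjSimplicial s := by
  classical
  induction s using Finset.strongInduction with | H s ih =>
  by_cases hs : G.IsClique (s : Set V)
  · exact .inl hs
  right
  obtain ⟨a, ha, b, hb, hab, hnadj⟩ : ∃ a ∈ s, ∃ b ∈ s, a ≠ b ∧ ¬ G.Adj a b := by
    simpa [IsClique, Set.Pairwise] using hs
  obtain ⟨C, S, hCSs, hCS, hbC, haCS, hS, hnbrC⟩ := hG.exists_clique_separator ha hb hab hnadj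
  have haC : a ∉ C := fun h => haCS (Finset.mem_union_left _ h)
  have haS : a ∉ S := fun h => haCS (Finset.mem_union_right _ h)
  obtain ⟨v, ⟨hvCS, hvS⟩, hvs⟩ := exists_isSimplicialIn_diff (s := s)
    (ih _ ((Finset.ssubset_iff_of_subset hCSs).2 ⟨a, ha, haCS⟩)) hS
    ⟨b, by simp [hbC], Finset.disjoint_left.1 hCS hbC⟩
    fun v hv => hnbrC v ((Finset.mem_union.1 hv.1).resolve_right hv.2)
  have hvC : v ∈ C := (Finset.mem_union.1 hvCS).resolve_right hvS
  have hnbr_out : ∀ u ∈ (↑(s \ C) : Set V) \ ↑S, G.neighborSet u ∩ s ⊆ ↑(s \ C) := by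
    rintro u ⟨husC, huS⟩ x ⟨hux, hxs⟩
    rw [Finset.coe_sdiff, Set.mem_sdiff] at husC ⊢
    refine ⟨hxs, fun hxC => ?_⟩
    rcases Finset.mem_union.1 (hnbrC x hxC ⟨hux.symm, husC.1⟩) with h | h
    exacts [husC.2 h, huS h]
  obtain ⟨w, ⟨hwsC, hwS⟩, hws⟩ := exists_isSimplicialIn_diff (s := s)
    (ih _ (Finset.sdiff_ssubset (fun c hc => hCSs (Finset.mem_union_left _ hc)) ⟨b, hbC⟩)) hS
    ⟨a, by simp [ha, haC], haS⟩ hnbr_out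
  rw [Finset.coe_sdiff, Set.mem_sdiff] at hwsC
  refine ⟨v, hCSs hvCS, w, hwsC.1, ?_, fun hvw => ?_, hvs, hws⟩
  · rintro rfl
    exact hwsC.2 hvC
  · rcases Finset.mem_union.1 (hnbrC v hvC ⟨hvw, hwsC.1⟩) with h | h
    exacts [hwsC.2 h, hwS h]

theorem Chordal.exists_isSimplicialIn (hG : Chordal G) {s : Finset V} (hs : s.Nonempty) :
    ∃ v ∈ s, G.IsSimplicialIn s v := by
  rcases hG.isClique_or_hasTwoNonadjSimplicial s with h | ⟨v, hv, -, -, -, -, hsv, -⟩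
  · obtain ⟨v, hv⟩ := hs
    exact ⟨v, hv, h.subset Set.inter_subset_right⟩
  · exact ⟨v, hv, hsv⟩
theorem Chordal.exists_isClique_coloring (hG : Chordal G) (s : Finset V) :
    ∃ t ⊆ s, G.IsClique (t : Set V) ∧ ∃ f : V → ℕ,
      (∀ v ∈ s, f v < t.card) ∧ ∀ u ∈ s, ∀ w ∈ s, G.Adj u w → f u ≠ f w := by
  classical
  induction s using Finset.strongInduction with | H s ih =>
  rcases s.eq_empty_or_nonempty with rfl | hs
  · exact ⟨∅, subset_rfl, by simp, fun _ => 0, by simp, by simp⟩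
  obtain ⟨v, hv, hvs⟩ := hG.exists_isSimplicialIn hs
  obtain ⟨t', ht's, ht', f', hf'lt, hf'⟩ := ih _ (Finset.erase_ssubset hv)
  set N := s.filter (G.Adj v)
  have hvN : v ∉ N := fun h => G.irrefl (Finset.mem_filter.1 h).2
  have hK : G.IsClique (insert v N : Finset V) := by
    rw [Finset.coe_insert]
    refine IsClique.insert (hvs.subset fun w hw => ?_) fun w hw _ => (Finset.mem_filter.1 hw).2
    exact ⟨(Finset.mem_filter.1 hw).2, (Finset.mem_filter.1 hw).1⟩
  have hKs : insert v N ⊆ s := Finset.insert_subset hv (Finset.filter_subset _ _)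
  obtain ⟨t, hts, ht, ht't, hKt⟩ : ∃ t ⊆ s, G.IsClique (t : Set V) ∧
      t'.card ≤ t.card ∧ (insert v N).card ≤ t.card := by
    rcases le_total t'.card (insert v N).card with h | h
    · exact ⟨_, hKs, hK, h, le_rfl⟩
    · exact ⟨t', ht's.trans (Finset.erase_subset _ _), ht', le_rfl, h⟩
  obtain ⟨c, hc, hcN⟩ : ∃ c ∈ Finset.range (insert v N).card, c ∉ N.image f' := by
    refine Finset.exists_mem_notMem_of_card_lt_card ?_
    rw [Finset.card_range, Finset.card_insert_of_notMem hvN]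
    exact Nat.lt_succ_of_le Finset.card_image_le
  have hcw : ∀ w ∈ s, G.Adj v w → c ≠ f' w :=
    fun w hw hvw h => hcN (Finset.mem_image.2 ⟨w, Finset.mem_filter.2 ⟨hw, hvw⟩, h.symm⟩)
  refine ⟨t, hts, ht, Function.update f' v c, fun u hu => ?_, fun u hu w hw huw => ?_⟩
  · rcases eq_or_ne u v with rfl | huv
    · rw [Function.update_self]
      exact (Finset.mem_range.1 hc).trans_le hKt
    · rw [Function.update_of_ne huv]
      exact (hf'lt u (Finset.mem_erase.2 ⟨huv, hu⟩)).trans_le ht't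
  · by_cases huv : u = v
    · subst huv
      rw [Function.update_self, Function.update_of_ne huw.ne.symm]
      exact hcw w hw huw
    by_cases hwv : w = v
    · subst hwv
      rw [Function.update_self, Function.update_of_ne huv]
      exact (hcw u hu huw.symm).symm
    rw [Function.update_of_ne huv, Function.update_of_ne hwv]
    exact hf' u (Finset.mem_erase.2 ⟨huv, hu⟩) w (Finset.mem_erase.2 ⟨hwv, hw⟩) huw

theorem cardChromNum_le_of_colorable {n : ℕ} (h : G.Colorable n) : cardChromNum G ≤ n := by
  obtain ⟨C⟩ := h
  unfold cardChromNum
  refine le_trans (csInf_le' ⟨Set.range C.colorClass, ?_, ?_, rfl⟩) ?_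
  · rintro _ ⟨c, rfl⟩ u hu w hw _ huw
    exact C.valid huw (hu.trans hw.symm)
  · exact Set.eq_univ_of_forall fun v => ⟨_, ⟨C v, rfl⟩, rfl⟩
  · simpa using Cardinal.mk_range_le_lift (f := C.colorClass)

theorem le_cardCliqueNum {s : Set V} (hs : G.IsClique s) : #s ≤ cardCliqueNum G :=
  le_ciSup Cardinal.bddAbove_of_small (⟨s, hs⟩ : {s : Set V // G.IsClique s})

theorem cardCliqueNum_le_cardChromNum : cardCliqueNum G ≤ cardChromNum G := by
  refine ciSup_le' fun ⟨s, hs⟩ => le_csInf ?_ ?_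
  · refine ⟨_, Set.range fun v => {v}, ?_, ?_, rfl⟩
    · rintro _ ⟨v, rfl⟩
      exact Set.pairwise_singleton _ _
    · exact Set.eq_univ_of_forall fun v => ⟨_, ⟨v, rfl⟩, rfl⟩
  rintro _ ⟨P, hP, hcover, rfl⟩
  have hmem : ∀ v : s, ∃ A ∈ P, (v : V) ∈ A := fun v =>
    Set.mem_sUnion.1 (hcover ▸ Set.mem_univ (v : V))
  choose A hAP hvA using hmem
  refine Cardinal.mk_le_of_injective (f := fun v => (⟨A v, hAP v⟩ : P)) fun v w hvw => ?_
  by_contra hne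
  have hA : A v = A w := congrArg Subtype.val hvw
  exact hP _ (hAP v) (hvA v) (hA ▸ hvA w) (Subtype.coe_ne_coe.2 hne)
    (hs v.2 w.2 (Subtype.coe_ne_coe.2 hne))

theorem cardChromNum_eq_cardCliqueNum_of_colorable {t : Finset V}
    (ht : G.IsClique (t : Set V)) (hcol : G.Colorable t.card) :
    cardChromNum G = cardCliqueNum G :=
  le_antisymm
    ((cardChromNum_le_of_colorable hcol).trans (by simpa using le_cardCliqueNum ht))
    cardCliqueNum_le_cardChromNum

theorem Chordal.exists_isClique_colorable [Fintype V] (hG : Chordal G) :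
    ∃ t : Finset V, G.IsClique (t : Set V) ∧ G.Colorable t.card := by
  obtain ⟨t, -, ht, f, hflt, hf⟩ := hG.exists_isClique_coloring Finset.univ
  exact ⟨t, ht, ⟨Coloring.mk (fun v => ⟨f v, hflt v (Finset.mem_univ v)⟩)
    fun huw h => hf _ (Finset.mem_univ _) _ (Finset.mem_univ _) huw (congrArg Fin.val h)⟩⟩

end

/-- Hajnal–Surányi / Berge: chordal graphs are perfect, i.e. if `G` is chordal then
`χ(G_X) = ω(G_X)` for every finite set of vertices `X`. -/
theorem chordal_graphs_are_perfect {V : Type u} (G : SimpleGraph V) (hG : Chordal G) :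
    ∀ X : Set V, X.Finite → cardChromNum (G.induce X) = cardCliqueNum (G.induce X) := by
  intro X hX
  have := hX.fintype
  obtain ⟨t, ht, hcol⟩ := (hG.comap (Embedding.induce X)).exists_isClique_colorable
  exact cardChromNum_eq_cardCliqueNum_of_colorable ht hcol
end

section
/- The following two reflection statements are equivalent: (i) for every 2-dimensional poset P, if every subset of P of cardinality ℵ1 is the union of countably many antichains, then P is the union of countably many antichains; (ii) for every 2-dimensional poset P, if every subset of P of cardinality ℵ1 is the union of countably many chains, then P is the union of countably many chains. -/
open Cardinal

universe u

/-- A poset is 2-dimensional if its order relation is the intersection of two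
linear orders on its underlying set. -/
def TwoDim (P : Type u) [PartialOrder P] : Prop :=
  ∃ le₁ le₂ : P → P → Prop, IsLinearOrder P le₁ ∧ IsLinearOrder P le₂ ∧
    ∀ x y : P, x ≤ y ↔ (le₁ x y ∧ le₂ x y)

/-- A subset `Q` of a poset is the union of countably many chains
(with respect to the induced order). -/
def CtblChainCover {P : Type u} [PartialOrder P] (Q : Set P) : Prop :=
  ∃ f : Q → ℕ, ∀ x y : Q, f x = f y → ((x : P) ≤ y ∨ (y : P) ≤ x)

/-- A subset `Q` of a poset is the union of countably many antichains
(with respect to the induced order). -/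
def CtblAntichainCover {P : Type u} [PartialOrder P] (Q : Set P) : Prop :=
  ∃ f : Q → ℕ, ∀ x y : Q, f x = f y → x ≠ y → ¬((x : P) ≤ y) ∧ ¬((y : P) ≤ x)

section Conj

variable {α : Type u}

/-- Type synonym carrying the conjugate order. -/
def Conj (α : Type u) : Type u := α

/-- The conjugate partial order: intersect the first linear order with the
reverse of the second. -/
def conjPO (r s : α → α → Prop) (hr : IsLinearOrder α r) (hs : IsLinearOrder α s) :
    PartialOrder (Conj α) where
  le x y := r x y ∧ s y x
  le_refl x := ⟨hr.refl x, hs.refl x⟩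
  le_trans _ _ _ h1 h2 := ⟨hr.trans _ _ _ h1.1 h2.1, hs.trans _ _ _ h2.2 h1.2⟩
  le_antisymm _ _ h1 h2 := hr.antisymm _ _ h1.1 h2.1

/-- The reverse of a linear order is a linear order. -/
def swapLO (s : α → α → Prop) (hs : IsLinearOrder α s) :
    IsLinearOrder α (fun x y => s y x) where
  refl a := hs.refl a
  trans _ _ _ h1 h2 := hs.trans _ _ _ h2 h1
  antisymm _ _ h1 h2 := hs.antisymm _ _ h2 h1
  total a b := hs.total b a

end Conj

section Key

variable {α : Type u} [PartialOrder α] {r s : α → α → Prop}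

lemma incomp_iff (hr : IsLinearOrder α r) (hs : IsLinearOrder α s)
    (hle : ∀ x y : α, x ≤ y ↔ r x y ∧ s x y) (x y : α) (hxy : x ≠ y) :
    (¬ x ≤ y ∧ ¬ y ≤ x) ↔ ((r x y ∧ s y x) ∨ (r y x ∧ s x y)) := by
  rw [hle, hle]
  have ar : r x y → r y x → False := fun a b => hxy (hr.antisymm _ _ a b)
  have as' : s x y → s y x → False := fun a b => hxy (hs.antisymm _ _ a b)
  have tr := hr.total x y
  have ts := hs.total x y
  tauto

lemma comp_iff (hr : IsLinearOrder α r) (hs : IsLinearOrder α s)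
    (hle : ∀ x y : α, x ≤ y ↔ r x y ∧ s x y) (x y : α) (hxy : x ≠ y) :
    (x ≤ y ∨ y ≤ x) ↔ (¬(r x y ∧ s y x) ∧ ¬(r y x ∧ s x y)) := by
  rw [hle, hle]
  have ar : r x y → r y x → False := fun a b => hxy (hr.antisymm _ _ a b)
  have as' : s x y → s y x → False := fun a b => hxy (hs.antisymm _ _ a b)
  have tr := hr.total x y
  have ts := hs.total x y
  tauto

end Key

/-- The following reflection statements are equivalent:
(i) every 2-dimensional poset all of whose subsets of size `ℵ₁` are unions of
countably many antichains is itself a union of countably many antichains;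
(ii) every 2-dimensional poset all of whose subsets of size `ℵ₁` are unions of
countably many chains is itself a union of countably many chains. -/
theorem twoDim_antichain_reflection_iff_chain_reflection :
    (∀ (P : Type u) [PartialOrder P], TwoDim P →
      (∀ Q : Set P, #Q = aleph 1 → CtblAntichainCover Q) →
        CtblAntichainCover (Set.univ : Set P)) ↔
    (∀ (P : Type u) [PartialOrder P], TwoDim P →
      (∀ Q : Set P, #Q = aleph 1 → CtblChainCover Q) →
        CtblChainCover (Set.univ : Set P)) := by
  constructor
  · -- antichain reflection → chain reflection
    intro H P inst hP hQ
    obtain ⟨r, s, hr, hs, hle⟩ := hP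
    letI instC : PartialOrder (Conj P) := conjPO r s hr hs
    have hTD : TwoDim (Conj P) :=
      ⟨r, fun x y => s y x, hr, swapLO s hs, fun _ _ => Iff.rfl⟩
    have key : CtblAntichainCover (Set.univ : Set (Conj P)) := by
      apply H (Conj P) hTD
      intro Q hcard
      have hQ' : CtblChainCover (P := P) Q := hQ Q hcard
      obtain ⟨f, hf⟩ := hQ'
      refine ⟨f, ?_⟩
      intro x y hfe hne
      have hne' : x.1 ≠ y.1 := fun h => hne (Subtype.ext h)
      have hcomp := hf x y hfe
      exact (comp_iff (α := P) hr hs hle x.1 y.1 hne').mp hcomp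
    obtain ⟨f, hf⟩ := key
    refine ⟨f, ?_⟩
    intro x y hfe
    by_cases hne : x = y
    · subst hne; exact Or.inl le_rfl
    · have hne' : x.1 ≠ y.1 := fun h => hne (Subtype.ext h)
      have h := hf x y hfe hne
      exact (comp_iff (α := P) hr hs hle x.1 y.1 hne').mpr h
  · -- chain reflection → antichain reflection
    intro H P inst hP hQ
    obtain ⟨r, s, hr, hs, hle⟩ := hP
    letI instC : PartialOrder (Conj P) := conjPO r s hr hs
    have hTD : TwoDim (Conj P) :=
      ⟨r, fun x y => s y x, hr, swapLO s hs, fun _ _ => Iff.rfl⟩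
    have key : CtblChainCover (Set.univ : Set (Conj P)) := by
      apply H (Conj P) hTD
      intro Q hcard
      have hQ' : CtblAntichainCover (P := P) Q := hQ Q hcard
      obtain ⟨f, hf⟩ := hQ'
      refine ⟨f, ?_⟩
      intro x y hfe
      by_cases hne : x = y
      · subst hne; exact Or.inl (instC.le_refl _)
      · have hne' : x.1 ≠ y.1 := fun h => hne (Subtype.ext h)
        have h := hf x y hfe hne
        exact (incomp_iff (α := P) hr hs hle x.1 y.1 hne').mp h
    obtain ⟨f, hf⟩ := key
    refine ⟨f, ?_⟩
    intro x y hfe hne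
    have hne' : x.1 ≠ y.1 := fun h => hne (Subtype.ext h)
    have h := hf x y hfe
    exact (incomp_iff (α := P) hr hs hle x.1 y.1 hne').mpr h
end

section
/- For every tree T, the following are equivalent: (i) T is the union of countably many antichains; (ii) T is the union of countably many conversely well-founded subsets, i.e., subsets containing no strictly increasing infinite sequence; (iii) T is the union of countably many subsets each of which contains no infinite chain. -/
universe u

/-- A partial order is a tree if it is well-founded and the set of strict
predecessors of every element is a chain. -/
def IsTreeOrder (T : Type u) [PartialOrder T] : Prop :=
  WellFounded ((· < ·) : T → T → Prop) ∧ ∀ v : T, IsChain (· ≤ ·) {u : T | u < v}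

/-!
A colouring `f : T → ℕ` whose colour classes contain no strictly increasing sequence is refined
into one by antichains: `x` receives the pair of its colour and the number of strictly smaller
elements of its colour. In a tree those elements form a chain, well-founded in both directions and
hence finite, and the count strictly grows along `<` inside a colour class.
-/

section

variable {α : Type*} [PartialOrder α]

theorem IsChain.finite_of_not_exists_strictMono (hwf : WellFounded ((· < ·) : α → α → Prop))
    {s : Set α} (hs : IsChain (· ≤ ·) s)
    (hno : ¬∃ g : ℕ → α, (∀ k, g k ∈ s) ∧ StrictMono g) : s.Finite := by
  classical
  let := hs.linearOrder
  have : WellFoundedLT s := ⟨InvImage.wf Subtype.val hwf⟩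
  have : WellFoundedGT s := ⟨wellFounded_iff_isEmpty_descending_chain.mpr ⟨fun ⟨g, hg⟩ =>
    hno ⟨fun k => g k, fun k => (g k).2, strictMono_nat_of_lt_succ hg⟩⟩⟩
  exact Set.finite_coe_iff.mp (Finite.of_wellFoundedLT_wellFoundedGT s)

def sameColorBelow {β : Type*} (f : α → β) (x : α) : Set α :=
  {y | f y = f x ∧ y < x}

theorem sameColorBelow_ssubset {β : Type*} {f : α → β} {x y : α} (hxy : x < y)
    (hf : f x = f y) : sameColorBelow f x ⊂ sameColorBelow f y := by
  refine ⟨fun z hz => ⟨hz.1.trans hf, hz.2.trans hxy⟩, fun hsub => ?_⟩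
  exact lt_irrefl x (hsub ⟨hf, hxy⟩).2

theorem isAntichain_preimage_pair {f r : α → ℕ}
    (hr : ∀ x y, x < y → f x = f y → r x < r y) (n : ℕ) :
    IsAntichain (· ≤ ·) ((fun x => Nat.pair (f x) (r x)) ⁻¹' {n}) := by
  intro x hx y hy hne hle
  obtain ⟨hf, hr'⟩ := Nat.pair_eq_pair.mp ((hx : _ = n).trans (hy : _ = n).symm)
  exact (hr x y (hle.lt_of_ne hne) hf).ne hr'

end

theorem IsTreeOrder.finite_sameColorBelow {T : Type u} [PartialOrder T] (htree : IsTreeOrder T)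
    {f : T → ℕ} (hf : ∀ n : ℕ, ¬∃ g : ℕ → T, (∀ k, f (g k) = n) ∧ StrictMono g) (x : T) :
    (sameColorBelow f x).Finite := by
  refine (htree.2 x |>.mono fun y hy => hy.2).finite_of_not_exists_strictMono htree.1 ?_
  rintro ⟨g, hg, hmono⟩
  exact hf (f x) ⟨g, fun k => (hg k).1, hmono⟩

/-- For a tree `T`, the following are equivalent:
(i) `T` is the union of countably many antichains;
(ii) `T` is the union of countably many conversely well-founded subsets
(subsets with no strictly increasing infinite sequence);
(iii) `T` is the union of countably many subsets containing no infinite chain. -/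
theorem tree_special_tfae {T : Type u} [PartialOrder T] (htree : IsTreeOrder T) :
    List.TFAE [
      ∃ f : T → ℕ, ∀ n : ℕ, IsAntichain (· ≤ ·) (f ⁻¹' {n}),
      ∃ f : T → ℕ, ∀ n : ℕ, ¬∃ g : ℕ → T, (∀ k, f (g k) = n) ∧ StrictMono g,
      ∃ f : T → ℕ, ∀ n : ℕ, ∀ s : Set T, s ⊆ f ⁻¹' {n} → IsChain (· ≤ ·) s → s.Finite] := by
  tfae_have 1 → 3 := fun ⟨f, hf⟩ => ⟨f, fun n s hsub hchain =>
    (subsingleton_of_isChain_of_isAntichain hchain ((hf n).subset hsub)).finite⟩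
  tfae_have 3 → 2 := by
    rintro ⟨f, hf⟩
    refine ⟨f, fun n ⟨g, hgn, hg⟩ => Set.infinite_range_of_injective hg.injective ?_⟩
    exact hf n _ (Set.range_subset_iff.mpr hgn) hg.monotone.isChain_range
  tfae_have 2 → 1 := by
    rintro ⟨f, hf⟩
    refine ⟨fun x => Nat.pair (f x) (sameColorBelow f x).ncard, isAntichain_preimage_pair ?_⟩
    intro x y hxy hfxy
    exact Set.ncard_lt_ncard (sameColorBelow_ssubset hxy hfxy) (htree.finite_sameColorBelow hf y)
  tfae_finish
end

section
/- If a graph G has an n-dimensional transitive orientation, then every transitive orientation of G is n-dimensional. That is, if some partial order on the vertex set V whose comparability relation (on distinct vertices) equals the edge relation of G is the intersection of n linear orders on V, then every partial order on V whose comparability relation equals the edge relation of G is the intersection of n linear orders on V. -/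
universe u

/-- A transitive orientation of a graph `G`: a partial order on the vertices whose
comparability relation between distinct vertices coincides with adjacency in `G`. -/
def TransOrientation {V : Type u} (G : SimpleGraph V) (le : V → V → Prop) : Prop :=
  IsPartialOrder V le ∧ ∀ x y : V, x ≠ y → (G.Adj x y ↔ (le x y ∨ le y x))

/-- A relation is `n`-dimensional if it is the intersection of `n` linear orders. -/
def NDimRel {V : Type u} (n : ℕ) (le : V → V → Prop) : Prop :=
  ∃ L : Fin n → (V → V → Prop), (∀ i, IsLinearOrder V (L i)) ∧
    ∀ x y : V, le x y ↔ ∀ i, L i x y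

/-!
By compactness (Kőnig's lemma for inverse systems of finite sets of realizers) it suffices to
treat finite vertex sets, by induction on their size. Let `P` and `Q` be transitive orientations of `G` with `P`
`n`-dimensional. If the graph of edges on which `P` and `Q` disagree is disconnected, its
components are `Q`-modules across which `Q` agrees with `P`, so `Q` is a lexicographic sum of
smaller orders over an `n`-dimensional one. The same holds for the graph of edges on which they
agree (reverse `Q`), and for the components of `Gᶜ`, across which `Q` is linear. If all three
graphs are connected, a flipped edge and an agreeing edge both have implication classes covering
every vertex. A triangle built from these two edges gives an edge of one class whose ends have a
common upper bound in both orders (after reversing both orders if necessary). This property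
spreads along the class and fails at the class edge through a maximal element.
-/

open Function Set

section

variable {V W : Type u} {n : ℕ} {R Q : V → V → Prop}

theorem isStrictTotalOrder_and_ne {α : Type*} {r : α → α → Prop} [IsLinearOrder α r] :
    IsStrictTotalOrder α (fun a b => r a b ∧ a ≠ b) where
  irrefl _ h := h.2 rfl
  trans _ _ _ hab hbc := ⟨_root_.trans hab.1 hbc.1, fun h => by
    subst h; exact hab.2 (antisymm hab.1 hbc.1)⟩
  trichotomous a b hab hba := by
    rcases total_of r a b with h | h
    · by_contra hne; exact hab ⟨h, hne⟩
    · by_contra hne; exact hba ⟨h, Ne.symm hne⟩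

def Realizer (n : ℕ) (R : V → V → Prop) : Type u :=
  {L : Fin n → V → V → Prop //
    (∀ i, IsLinearOrder V (L i)) ∧ ∀ x y, R x y ↔ ∀ i, L i x y}

theorem nDimRel_iff_nonempty_realizer : NDimRel n R ↔ Nonempty (Realizer n R) :=
  ⟨fun ⟨L, h⟩ => ⟨⟨L, h⟩⟩, fun ⟨L, h⟩ => ⟨L, h⟩⟩

def Realizer.comap (L : Realizer n R) {f : W → V} (hf : Injective f) : Realizer n (R on f) :=
  ⟨fun i => L.1 i on f, fun i => have := L.2.1 i; hf.isLinearOrder_onFun _,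
    fun a b => L.2.2 (f a) (f b)⟩

namespace NDimRel

theorem comap (h : NDimRel n R) {f : W → V} (hf : Injective f) : NDimRel n (R on f) :=
  have ⟨L⟩ := nDimRel_iff_nonempty_realizer.1 h
  nDimRel_iff_nonempty_realizer.2 ⟨L.comap hf⟩

theorem dual (h : NDimRel n R) : NDimRel n (swap R) := by
  obtain ⟨L, hL, hR⟩ := h
  exact ⟨fun i => swap (L i), fun i => have := hL i; inferInstance, fun a b => hR b a⟩

theorem of_subsingleton [Subsingleton V] (hR : ∀ x, R x x) : NDimRel n R := by
  have : IsLinearOrder V R :=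
    { refl := hR
      trans := fun a b c _ _ => Subsingleton.elim a c ▸ hR a
      antisymm := fun a b _ _ => Subsingleton.elim a b
      total := fun a b => Or.inl (Subsingleton.elim a b ▸ hR a) }
  exact ⟨fun _ => R, fun _ => this, fun a b => by simp [Subsingleton.elim a b, hR]⟩

theorem of_isLinearOrder [IsLinearOrder V R] (hn : n ≠ 0) : NDimRel n R :=
  ⟨fun _ => R, fun _ => inferInstance,
    fun _ _ => ⟨fun h _ => h, fun h => h ⟨0, Nat.pos_of_ne_zero hn⟩⟩⟩

theorem sigmaLex {ι : Type u} {α : ι → Type u} {R : ι → ι → Prop}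
    {S : ∀ i, α i → α i → Prop} (hR : NDimRel n R) (hS : ∀ i, NDimRel n (S i)) :
    NDimRel n (Sigma.Lex (fun i j => R i j ∧ i ≠ j) S) := by
  obtain ⟨L, hL, hRL⟩ := hR
  choose K hK hSK using hS
  refine ⟨fun k => Sigma.Lex (fun i j => L k i j ∧ i ≠ j) (fun i => K i k), fun k => ?_, ?_⟩
  · have := hL k
    have := isStrictTotalOrder_and_ne (r := L k)
    have := fun i => hK i k
    exact {}
  · rintro ⟨i, a⟩ ⟨j, b⟩
    simp only [Sigma.lex_iff]
    by_cases hij : i = j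
    · subst hij
      simp [hSK]
    · simp [hij, hRL]

theorem of_fibers {ι : Type u} (f : V → ι) {R : ι → ι → Prop} (hR : NDimRel n R)
    (hRQ : ∀ a b, f a ≠ f b → (R (f a) (f b) ↔ Q a b))
    (hfib : ∀ c, NDimRel n (fun a b : {x // f x = c} => Q a b)) : NDimRel n Q := by
  convert (sigmaLex hR hfib).comap (Equiv.sigmaFiberEquiv f).symm.injective using 1
  have val_cast : ∀ {c d : ι} (h : c = d) (x : {x // f x = c}),
      ((h ▸ x : {x // f x = d}) : V) = x
    | _, _, rfl, _ => rfl
  ext a b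
  by_cases hab : f a = f b
  · simp [onFun, Sigma.lex_iff, hab, val_cast]
  · simp [onFun, Sigma.lex_iff, hab, hRQ a b hab]

open CategoryTheory in
theorem of_forall_finset (h : ∀ s : Finset V, NDimRel n (Q on ((↑) : s → V))) :
    NDimRel n Q := by
  classical
  let F : (Finset V)ᵒᵖ ⥤ Type u :=
    { obj s := Realizer n (Q on ((↑) : s.unop → V))
      map hst := TypeCat.ofHom fun L => L.comap (Set.inclusion_injective (leOfHom hst.unop)) }
  have : ∀ s, Nonempty (F.obj s) := fun s => nDimRel_iff_nonempty_realizer.1 (h s.unop)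
  have : ∀ s, Finite (F.obj s) := fun s => Subtype.finite
  obtain ⟨u, hu⟩ := nonempty_sections_of_finite_inverse_system F
  let L (i : Fin n) (x y : V) : Prop :=
    (u (.op {x, y})).1 i ⟨x, by simp⟩ ⟨y, by simp⟩
  have hL : ∀ (s : Finset V) (x y) (hx : x ∈ s) (hy : y ∈ s) i,
      L i x y ↔ (u (.op s)).1 i ⟨x, hx⟩ ⟨y, hy⟩ := by
    intro s x y hx hy i
    have hxy : {x, y} ⊆ s := by simp [Finset.insert_subset_iff, hx, hy]
    simp only [L, ← hu (homOfLE hxy).op]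
    rfl
  refine ⟨L, fun i => { refl := ?_, trans := ?_, antisymm := ?_, total := ?_ }, fun x y => ?_⟩
  · exact fun x => ((u (.op {x, x})).2.1 i).refl _
  · intro x y z hxy hyz
    rw [hL {x, y, z} x y (by simp) (by simp)] at hxy
    rw [hL {x, y, z} y z (by simp) (by simp)] at hyz
    rw [hL {x, y, z} x z (by simp) (by simp)]
    exact ((u _).2.1 i).trans _ _ _ hxy hyz
  · intro x y hxy hyx
    rw [hL {x, y} y x (by simp) (by simp)] at hyx
    exact congrArg Subtype.val (((u _).2.1 i).antisymm _ _ hxy hyx)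
  · intro x y
    rw [hL {x, y} y x (by simp) (by simp)]
    exact ((u _).2.1 i).total _ _
  · exact (u (.op {x, y})).2.2 ⟨x, by simp⟩ ⟨y, by simp⟩

end NDimRel

namespace TransOrientation

variable {G : SimpleGraph V} {P Q : V → V → Prop} {a b x y z : V}

theorem refl (hP : TransOrientation G P) (x : V) : P x x := hP.1.refl x

theorem trans (hP : TransOrientation G P) (hxy : P x y) (hyz : P y z) : P x z :=
  hP.1.trans _ _ _ hxy hyz

theorem antisymm (hP : TransOrientation G P) (hxy : P x y) (hyx : P y x) : x = y :=
  hP.1.antisymm _ _ hxy hyx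

theorem adj_iff (hP : TransOrientation G P) (hxy : x ≠ y) : G.Adj x y ↔ P x y ∨ P y x :=
  hP.2 x y hxy

theorem adj (hP : TransOrientation G P) (hxy : x ≠ y) (h : P x y) : G.Adj x y :=
  (hP.adj_iff hxy).2 (.inl h)

theorem le_or_le (hP : TransOrientation G P) (h : G.Adj x y) : P x y ∨ P y x :=
  (hP.adj_iff h.ne).1 h

theorem dual (hP : TransOrientation G P) : TransOrientation G (swap P) :=
  ⟨have := hP.1; inferInstance, fun _ _ hxy => (hP.adj_iff hxy).trans or_comm⟩

theorem comap (hP : TransOrientation G P) {f : W → V} (hf : Injective f) :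
    TransOrientation (G.comap f) (P on f) :=
  ⟨have := hP.1; hf.isPartialOrder_onFun _, fun _ _ hxy => hP.adj_iff (hf.ne hxy)⟩

theorem le_of_le_of_compl_adj (hP : TransOrientation G P) (hxy : Gᶜ.Adj x y) (hyz : G.Adj y z)
    (h : P x z) : P y z :=
  (hP.le_or_le hyz).resolve_right fun hzy => hxy.2 (hP.adj hxy.1 (hP.trans h hzy))

theorem rel_iff_of_compl_adj (hQ : TransOrientation G Q) (hab : Gᶜ.Adj a b)
    (haz : G.Adj a z) (hbz : G.Adj b z) : (Q a z ↔ Q b z) ∧ (Q z a ↔ Q z b) :=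
  ⟨⟨hQ.le_of_le_of_compl_adj hab hbz, hQ.le_of_le_of_compl_adj hab.symm haz⟩,
    ⟨hQ.dual.le_of_le_of_compl_adj hab hbz, hQ.dual.le_of_le_of_compl_adj hab.symm haz⟩⟩

end TransOrientation

namespace SimpleGraph

variable {H : SimpleGraph V}

theorem Reachable.iff_of_adj {α : Type*} {H : SimpleGraph α} {p : α → Prop} {x y : α}
    (h : ∀ a b, H.Reachable x a → H.Adj a b → (p a ↔ p b)) (hxy : H.Reachable x y) :
    p x ↔ p y := by
  rw [reachable_iff_reflTransGen] at hxy
  induction hxy with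
  | refl => rfl
  | tail hxa hab ih => exact ih.trans (h _ _ ((reachable_iff_reflTransGen _ _).2 hxa) hab)

theorem rel_iff_of_reachable
    (hstep : ∀ a b z, H.Adj a b → ¬H.Reachable a z → (R a z ↔ R b z) ∧ (R z a ↔ R z b))
    {a a' b b' : V} (ha : H.Reachable a a') (hb : H.Reachable b b') (hab : ¬H.Reachable a b) :
    R a b ↔ R a' b' := by
  have far : ∀ {c c' z}, H.Reachable c c' → ¬H.Reachable c z →
      (R c z ↔ R c' z) ∧ (R z c ↔ R z c') := fun hc hz =>
    ⟨hc.iff_of_adj fun d d' hcd hdd' => (hstep d d' _ hdd' fun h => hz (hcd.trans h)).1,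
      hc.iff_of_adj fun d d' hcd hdd' => (hstep d d' _ hdd' fun h => hz (hcd.trans h)).2⟩
  exact (far ha hab).1.trans (far hb fun h => hab (ha.trans h.symm)).2

theorem reachable_out_iff {C D : H.ConnectedComponent} :
    H.Reachable (Quot.out C) (Quot.out D) ↔ C = D := by
  rw [← ConnectedComponent.eq]
  exact Iff.of_eq (congrArg₂ _ (Quot.out_eq C) (Quot.out_eq D))

theorem out_injective : Injective (Quot.out : H.ConnectedComponent → V) :=
  fun _ _ h => reachable_out_iff.1 (h ▸ .rfl)

theorem adj_of_not_reachable_compl {G : SimpleGraph V} {u v : V} (h : ¬Gᶜ.Reachable u v) :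
    G.Adj u v := by
  simpa using (Gᶜ.reachable_or_compl_adj u v).resolve_left h

theorem Preconnected.exists_adj_mem_not_mem (hH : H.Preconnected) {S : Set V} {u v : V}
    (hu : u ∈ S) (hv : v ∉ S) : ∃ x ∈ S, ∃ y ∉ S, H.Adj x y := by
  obtain ⟨p⟩ := hH u v
  obtain ⟨d, -, hd₁, hd₂⟩ := p.exists_boundary_dart S hu hv
  exact ⟨_, hd₁, _, hd₂, d.adj⟩

def IsModule (H : SimpleGraph V) (M : Set V) : Prop :=
  ∀ z ∉ M, ∀ u ∈ M, ∀ v ∈ M, H.Adj z u ↔ H.Adj z v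

theorem IsModule.union {M A : Set V} (hM : H.IsModule M) (hA : H.IsModule A) {x : V}
    (hxM : x ∈ M) (hxA : x ∈ A) : H.IsModule (M ∪ A) := by
  intro z hz
  have hx : ∀ u ∈ M ∪ A, H.Adj z u ↔ H.Adj z x := by
    rintro u (hu | hu)
    · exact hM z (fun h => hz (.inl h)) u hu x hxM
    · exact hA z (fun h => hz (.inr h)) u hu x hxA
  exact fun u hu v hv => (hx u hu).trans (hx v hv).symm

end SimpleGraph

def flipGraph (P Q : V → V → Prop) : SimpleGraph V :=
  SimpleGraph.fromRel fun x y => P x y ∧ Q y x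

section FlipGraph

variable {G : SimpleGraph V} {P Q : V → V → Prop} {a b x y z : V}

theorem iff_of_not_flipGraph_adj (hP : TransOrientation G P) (hQ : TransOrientation G Q)
    (h : ¬(flipGraph P Q).Adj x y) : P x y ↔ Q x y := by
  rcases eq_or_ne x y with rfl | hxy
  · exact iff_of_true (hP.refl x) (hQ.refl x)
  simp only [flipGraph, SimpleGraph.fromRel_adj, hxy, ne_eq, not_false_eq_true, true_and, not_or,
    not_and] at h
  constructor
  · exact fun hp => (hQ.le_or_le (hP.adj hxy hp)).resolve_right (h.1 hp)
  · exact fun hq => (hP.le_or_le (hQ.adj hxy hq)).resolve_right fun hp => h.2 hp hq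

theorem rel_iff_of_flipGraph_adj (hP : TransOrientation G P) (hQ : TransOrientation G Q)
    (hab : (flipGraph P Q).Adj a b) (ha : ¬(flipGraph P Q).Adj a z)
    (hb : ¬(flipGraph P Q).Adj b z) : (Q a z ↔ Q b z) ∧ (Q z a ↔ Q z b) := by
  wlog h : P a b ∧ Q b a generalizing a b
  · have hba := this hab.symm hb ha
      (((SimpleGraph.fromRel_adj _ _ _).1 hab).2.resolve_left h)
    exact ⟨hba.1.symm, hba.2.symm⟩
  obtain ⟨hPab, hQba⟩ := h
  have hPQ := fun {c d} (h : ¬(flipGraph P Q).Adj c d) => iff_of_not_flipGraph_adj hP hQ h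
  refine ⟨⟨hQ.trans hQba, fun hbz => ?_⟩, ⟨fun hza => ?_, fun hzb => hQ.trans hzb hQba⟩⟩
  · exact (hPQ ha).1 (hP.trans hPab ((hPQ hb).2 hbz))
  · exact (hPQ fun h => hb h.symm).1 (hP.trans ((hPQ fun h => ha h.symm).2 hza) hPab)

end FlipGraph

namespace NDimRel

variable {G H : SimpleGraph V} {P : V → V → Prop}

theorem of_connectedComponents
    (hstep : ∀ a b z, H.Adj a b → ¬H.Reachable a z → (Q a z ↔ Q b z) ∧ (Q z a ↔ Q z b))
    (hrep : NDimRel n (Q on (Quot.out : H.ConnectedComponent → V)))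
    (hcomp : ∀ C, NDimRel n (fun a b : {x // H.connectedComponentMk x = C} => Q a b)) :
    NDimRel n Q := by
  refine of_fibers H.connectedComponentMk hrep (fun a b hab => ?_) hcomp
  have hout : ∀ c, H.Reachable c (Quot.out (H.connectedComponentMk c)) := fun c =>
    SimpleGraph.ConnectedComponent.exact (Quot.out_eq _).symm
  exact (SimpleGraph.rel_iff_of_reachable hstep (hout a) (hout b)
    fun h => hab (SimpleGraph.ConnectedComponent.sound h)).symm

theorem of_flipGraph_components (hP : TransOrientation G P) (hQ : TransOrientation G Q)
    (hdim : NDimRel n P)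
    (hcomp : ∀ C,
      NDimRel n (fun a b : {x // (flipGraph P Q).connectedComponentMk x = C} => Q a b)) :
    NDimRel n Q := by
  refine of_connectedComponents (fun a b z hab hz => rel_iff_of_flipGraph_adj hP hQ hab
    (fun h => hz h.reachable) (fun h => hz (hab.reachable.trans h.reachable))) ?_ hcomp
  have hPQ : (P on Quot.out) = (Q on (Quot.out : (flipGraph P Q).ConnectedComponent → V)) := by
    ext C D
    show P (Quot.out C) (Quot.out D) ↔ Q (Quot.out C) (Quot.out D)
    refine iff_of_not_flipGraph_adj hP hQ fun h => h.ne ?_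
    rw [SimpleGraph.reachable_out_iff.1 h.reachable]
  exact hPQ ▸ hdim.comap SimpleGraph.out_injective

theorem of_compl_components (hQ : TransOrientation G Q) (hn : n ≠ 0)
    (hcomp : ∀ C, NDimRel n (fun a b : {x // Gᶜ.connectedComponentMk x = C} => Q a b)) :
    NDimRel n Q := by
  refine of_connectedComponents (fun a b z hab hz => hQ.rel_iff_of_compl_adj hab
    (SimpleGraph.adj_of_not_reachable_compl hz)
    (SimpleGraph.adj_of_not_reachable_compl fun h => hz (hab.reachable.trans h))) ?_ hcomp
  have := hQ.1
  have : IsLinearOrder _ (Q on (Quot.out : Gᶜ.ConnectedComponent → V)) :=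
    { SimpleGraph.out_injective.isPartialOrder_onFun Q with
      total C D := by
        rcases eq_or_ne C D with rfl | hCD
        · exact .inl (hQ.refl _)
        exact hQ.le_or_le (SimpleGraph.adj_of_not_reachable_compl
          (mt SimpleGraph.reachable_out_iff.1 hCD)) }
  exact of_isLinearOrder hn

end NDimRel

/-- Golumbic's forcing relation `Γ` on ordered edges; its connected components are the
implication classes of `G`. -/
def forcingGraph (G : SimpleGraph V) : SimpleGraph (V × V) where
  Adj e f := G.Adj e.1 e.2 ∧ G.Adj f.1 f.2 ∧
    (e.1 = f.1 ∧ Gᶜ.Adj e.2 f.2 ∨ e.2 = f.2 ∧ Gᶜ.Adj e.1 f.1)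
  symm := ⟨fun _ _ ⟨he, hf, h⟩ =>
    ⟨hf, he, h.imp (fun h => ⟨h.1.symm, h.2.symm⟩) (fun h => ⟨h.1.symm, h.2.symm⟩)⟩⟩
  loopless := ⟨fun _ ⟨_, _, h⟩ => h.elim (fun h => h.2.ne rfl) (fun h => h.2.ne rfl)⟩

theorem forcingGraph_adj {G : SimpleGraph V} {e f : V × V} :
    (forcingGraph G).Adj e f ↔ G.Adj e.1 e.2 ∧ G.Adj f.1 f.2 ∧
      (e.1 = f.1 ∧ Gᶜ.Adj e.2 f.2 ∨ e.2 = f.2 ∧ Gᶜ.Adj e.1 f.1) :=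
  Iff.rfl

def implClassVerts (G : SimpleGraph V) (e : V × V) : Set V :=
  {v | ∃ f, (forcingGraph G).Reachable e f ∧ (v = f.1 ∨ v = f.2)}

section ImplicationClasses

variable {G : SimpleGraph V} {P Q : V → V → Prop} {e f : V × V}

theorem forcingGraph_adj_swap (h : (forcingGraph G).Adj e f) :
    (forcingGraph G).Adj e.swap f.swap :=
  have ⟨he, hf, h⟩ := forcingGraph_adj.1 h
  forcingGraph_adj.2 ⟨he.symm, hf.symm, h.symm⟩

theorem adj_of_forcingGraph_reachable (he : G.Adj e.1 e.2) (h : (forcingGraph G).Reachable e f) :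
    G.Adj f.1 f.2 :=
  (h.iff_of_adj fun _ _ _ hab =>
    have ⟨ha, hb, _⟩ := forcingGraph_adj.1 hab
    iff_of_true ha hb).1 he

theorem implClassVerts_subset_swap : implClassVerts G e ⊆ implClassVerts G e.swap := by
  rintro v ⟨f, hf, hv⟩
  refine ⟨f.swap, (hf.iff_of_adj (p := fun g => (forcingGraph G).Reachable e.swap g.swap)
    fun a b _ hab => ?_).1 .rfl, hv.symm⟩
  have := (forcingGraph_adj_swap hab).reachable
  exact ⟨fun h => h.trans this, fun h => h.trans this.symm⟩

theorem TransOrientation.le_of_forcingGraph_adj (hP : TransOrientation G P)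
    (h : (forcingGraph G).Adj e f) (he : P e.1 e.2) : P f.1 f.2 := by
  obtain ⟨e₁, e₂⟩ := e
  obtain ⟨f₁, f₂⟩ := f
  obtain ⟨-, hf, ⟨rfl, h⟩ | ⟨rfl, h⟩⟩ := forcingGraph_adj.1 h
  · exact hP.dual.le_of_le_of_compl_adj h hf.symm he
  · exact hP.le_of_le_of_compl_adj h hf he

theorem TransOrientation.le_iff_of_forcingGraph_reachable (hP : TransOrientation G P)
    (h : (forcingGraph G).Reachable e f) : P e.1 e.2 ↔ P f.1 f.2 :=
  h.iff_of_adj fun _ _ _ hab =>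
    ⟨hP.le_of_forcingGraph_adj hab, hP.le_of_forcingGraph_adj hab.symm⟩

theorem isModule_implClassVerts (he : G.Adj e.1 e.2) : G.IsModule (implClassVerts G e) := by
  intro z hz
  -- If `z` saw only one end of a class edge, the edge from that end to `z` would join the class.
  have edge : ∀ f, (forcingGraph G).Reachable e f → (G.Adj z f.1 ↔ G.Adj z f.2) := by
    intro f hf
    have hfG := adj_of_forcingGraph_reachable he hf
    have hz₁ : f.1 ≠ z := fun h => hz ⟨f, hf, .inl h.symm⟩
    have hz₂ : f.2 ≠ z := fun h => hz ⟨f, hf, .inr h.symm⟩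
    constructor
    · refine fun h₁ => by_contra fun h₂ => hz ⟨(f.1, z), hf.trans ?_, .inr rfl⟩
      exact SimpleGraph.Adj.reachable <|
        forcingGraph_adj.2 ⟨hfG, h₁.symm, .inl ⟨rfl, hz₂, fun h => h₂ h.symm⟩⟩
    · refine fun h₂ => by_contra fun h₁ => hz ⟨(z, f.2), hf.trans ?_, .inl rfl⟩
      exact SimpleGraph.Adj.reachable <|
        forcingGraph_adj.2 ⟨hfG, h₂, .inr ⟨rfl, hz₁, fun h => h₁ h.symm⟩⟩
  have hfirst : ∀ f, (forcingGraph G).Reachable e f → (G.Adj z e.1 ↔ G.Adj z f.1) :=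
    fun f hf => hf.iff_of_adj (p := fun g => G.Adj z g.1) fun a b ha hab => by
      rcases (forcingGraph_adj.1 hab).2.2 with ⟨h, -⟩ | ⟨h, -⟩
      · rw [h]
      · rw [edge a ha, h, edge b (ha.trans hab.reachable)]
  have hverts : ∀ w ∈ implClassVerts G e, G.Adj z w ↔ G.Adj z e.1 := by
    rintro w ⟨f, hf, rfl | rfl⟩
    · exact (hfirst f hf).symm
    · exact (edge f hf).symm.trans (hfirst f hf).symm
  exact fun u hu v hv => (hverts u hu).trans (hverts v hv).symm

end ImplicationClasses

section PrimeCase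

variable {G : SimpleGraph V} {P Q : V → V → Prop}

theorem TransOrientation.exists_maximal [Finite V] [Nonempty V] (hP : TransOrientation G P) :
    ∃ m, ∀ x, P m x → x = m := by
  let _ : PartialOrder V :=
    { le := P, le_refl := hP.refl, le_trans := fun _ _ _ => hP.trans,
      le_antisymm := fun _ _ => hP.antisymm }
  obtain ⟨m, hm⟩ := (Set.finite_univ (α := V)).exists_maximal univ_nonempty
  exact ⟨m, fun x hx => hP.antisymm (hm.2 (mem_univ x) hx) hx⟩

theorem exists_flipped_of_mem_of_not_mem (hP : TransOrientation G P)
    (hF : (flipGraph P Q).Preconnected) {M : Set V} {x₀ y₀ : V} (hx₀ : x₀ ∈ M)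
    (hy₀ : y₀ ∉ M) :
    ∃ x ∈ M, ∃ y ∉ M, G.Adj x y ∧
      ∃ e : V × V, G.Adj e.1 e.2 ∧ P e.1 e.2 ∧ Q e.2 e.1 ∧
        x ∈ implClassVerts G e ∧ y ∈ implClassVerts G e := by
  obtain ⟨x, hx, y, hy, hxy⟩ := hF.exists_adj_mem_not_mem hx₀ hy₀
  obtain ⟨hne, h | h⟩ := (SimpleGraph.fromRel_adj _ _ _).1 hxy
  · exact ⟨x, hx, y, hy, hP.adj hne h.1, (x, y), hP.adj hne h.1, h.1, h.2,
      ⟨_, .rfl, .inl rfl⟩, ⟨_, .rfl, .inr rfl⟩⟩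
  · exact ⟨x, hx, y, hy, (hP.adj hne.symm h.1).symm, (y, x), hP.adj hne.symm h.1, h.1, h.2,
      ⟨_, .rfl, .inr rfl⟩, ⟨_, .rfl, .inl rfl⟩⟩

theorem exists_implClassVerts_eq_univ [Finite V] [Nontrivial V] (hP : TransOrientation G P)
    (hF : (flipGraph P Q).Preconnected) (hco : Gᶜ.Preconnected) :
    ∃ e : V × V, G.Adj e.1 e.2 ∧ P e.1 e.2 ∧ Q e.2 e.1 ∧ implClassVerts G e = univ := by
  -- Take a maximal proper module `M` and a flipped edge leaving it, with class vertex set `A`.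
  -- Then `M ∪ A = univ`, and every vertex of `M \ A` is adjacent to all of `A`, which
  -- disconnects `Gᶜ` unless `A = univ`.
  by_contra! H
  obtain ⟨x₀, y₀, hxy₀⟩ := exists_pair_ne V
  obtain ⟨x₀, -, -, -, -, e₀, he₀, hPe₀, hQe₀, hx₀, -⟩ :=
    exists_flipped_of_mem_of_not_mem hP hF (mem_singleton x₀) hxy₀.symm
  obtain ⟨M, -, ⟨hM, hMne, hMu⟩, hmax⟩ :=
    (Set.toFinite {M : Set V | G.IsModule M ∧ M.Nonempty ∧ M ≠ univ}).exists_le_maximal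
      ⟨isModule_implClassVerts he₀, ⟨x₀, hx₀⟩, H e₀ he₀ hPe₀ hQe₀⟩
  obtain ⟨y₁, hy₁⟩ := (ne_univ_iff_exists_notMem M).1 hMu
  obtain ⟨x, hxM, y, hyM, hxy, e, he, hPe, hQe, hxA, hyA⟩ :=
    exists_flipped_of_mem_of_not_mem hP hF hMne.some_mem hy₁
  set A := implClassVerts G e
  have hA : G.IsModule A := isModule_implClassVerts he
  have hMA : M ∪ A = univ := by
    by_contra hMA
    exact hyM (hmax ⟨hM.union hA hxM hxA, hMne.mono subset_union_left, hMA⟩ subset_union_left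
      (.inr hyA))
  have mem_A : ∀ v ∉ M \ A, v ∈ A := fun v hv =>
    by_contra fun hvA => hv ⟨(hMA ▸ mem_univ v).resolve_right hvA, hvA⟩
  obtain ⟨w, hw⟩ := (ne_univ_iff_exists_notMem A).1 (H e he hPe hQe)
  obtain ⟨u, hu, v, hv, huv⟩ := hco.exists_adj_mem_not_mem (S := M \ A)
    ⟨(hMA ▸ mem_univ w).resolve_right hw, hw⟩ fun h => h.2 hxA
  refine huv.2 ((hA u hu.2 v (mem_A v hv) y hyA).2 ?_)
  exact ((hM y hyM u hu.1 x hxM).2 hxy.symm).symm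

theorem exists_above_of_forcingGraph_adj (hP : TransOrientation G P) (hQ : TransOrientation G Q)
    {a b : V × V} (hab : (forcingGraph G).Adj a b) (ha : P a.1 a.2) (hb : P b.1 b.2 ∧ Q b.2 b.1)
    {d : V} (hPd : P a.2 d) (hQd : Q a.1 d) : ∃ d, P b.2 d ∧ Q b.1 d := by
  obtain ⟨a₁, a₂⟩ := a
  obtain ⟨b₁, b₂⟩ := b
  obtain ⟨haG, hbG, ⟨rfl, h⟩ | ⟨rfl, h⟩⟩ := forcingGraph_adj.1 hab
  · have hda : a₁ ≠ d := by rintro rfl; exact haG.ne (hP.antisymm ha hPd)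
    have hdb : d ≠ b₂ := by rintro rfl; exact hbG.ne (hQ.antisymm hQd hb.2)
    have hbd : G.Adj b₂ d := by
      by_contra hn
      have hforce : (forcingGraph G).Adj (a₁, d) (a₁, b₂) :=
        forcingGraph_adj.2
          ⟨hP.adj hda (hP.trans ha hPd), hbG, .inl ⟨rfl, hdb, fun h => hn h.symm⟩⟩
      exact hda (hQ.antisymm hQd (hQ.dual.le_of_forcingGraph_adj hforce.symm hb.2))
    exact ⟨d, hP.le_of_le_of_compl_adj h hbd hPd, hQd⟩
  · have hbd : b₁ ≠ d := by rintro rfl; exact hbG.ne (hP.antisymm hb.1 hPd)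
    exact ⟨d, hPd, hQ.le_of_le_of_compl_adj h (hP.adj hbd (hP.trans hb.1 hPd)) hQd⟩

theorem false_of_implClassVerts_eq_univ [Finite V] (hP : TransOrientation G P)
    (hQ : TransOrientation G Q) {e f : V × V} (he : G.Adj e.1 e.2) (hPe : P e.1 e.2)
    (hQe : Q e.2 e.1) (hspan : implClassVerts G e = univ) (hf : (forcingGraph G).Reachable e f)
    {d : V} (hPd : P f.2 d) (hQd : Q f.1 d) : False := by
  -- A common upper bound of the ends spreads along the class, which covers a `P`-maximal vertex.
  have hflip : ∀ g, (forcingGraph G).Reachable e g →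
      G.Adj g.1 g.2 ∧ P g.1 g.2 ∧ Q g.2 g.1 :=
    fun g hg => ⟨adj_of_forcingGraph_reachable he hg,
      (hP.le_iff_of_forcingGraph_reachable hg).1 hPe,
      (hQ.dual.le_iff_of_forcingGraph_reachable hg).1 hQe⟩
  have habove : ∀ g, (forcingGraph G).Reachable e g → ∃ d, P g.2 d ∧ Q g.1 d := by
    intro g hg
    refine ((hf.symm.trans hg).iff_of_adj (p := fun g => ∃ d, P g.2 d ∧ Q g.1 d)
      fun a b hfa hab => ?_).1 ⟨d, hPd, hQd⟩
    have ha := hflip a (hf.trans hfa)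
    have hb := hflip b ((hf.trans hfa).trans hab.reachable)
    exact ⟨fun ⟨_, hPd, hQd⟩ =>
        exists_above_of_forcingGraph_adj hP hQ hab ha.2.1 hb.2 hPd hQd,
      fun ⟨_, hPd, hQd⟩ =>
        exists_above_of_forcingGraph_adj hP hQ hab.symm hb.2.1 ha.2 hPd hQd⟩
  have : Nonempty V := ⟨e.1⟩
  obtain ⟨m, hm⟩ := hP.exists_maximal
  obtain ⟨g, hg, rfl | rfl⟩ : m ∈ implClassVerts G e := hspan ▸ mem_univ m
  · obtain ⟨hgG, hPg, -⟩ := hflip g hg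
    exact hgG.ne (hm _ hPg).symm
  · obtain ⟨hgG, -, hQg⟩ := hflip g hg
    obtain ⟨d, hPd, hQd⟩ := habove g hg
    rw [hm d hPd] at hQd
    exact hgG.ne (hQ.antisymm hQd hQg)

theorem false_of_preconnected [Finite V] [Nontrivial V] (hP : TransOrientation G P)
    (hQ : TransOrientation G Q) (hF : (flipGraph P Q).Preconnected)
    (hA : (flipGraph P (swap Q)).Preconnected) (hco : Gᶜ.Preconnected) : False := by
  obtain ⟨f, hf, hPf, hQf, hfspan⟩ := exists_implClassVerts_eq_univ hP hF hco
  obtain ⟨⟨a, b⟩, he, hPe, hQe, hespan⟩ := exists_implClassVerts_eq_univ hP hA hco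
  change Q a b at hQe
  -- `a` lies on an edge `g` of the flipped class. The third side of the triangle on `a`, `b` and
  -- `g` gives a common upper bound in both orders for `g` or for `(a, b)`, the latter after
  -- reversing `Q` (flipped class of `(a, b)`) or `P` (flipped class of `(b, a)`).
  obtain ⟨⟨g₁, g₂⟩, hg, hag⟩ : a ∈ implClassVerts G f := hfspan ▸ mem_univ a
  have hgG := adj_of_forcingGraph_reachable hf hg
  have hPg : P g₁ g₂ := (hP.le_iff_of_forcingGraph_reachable hg).1 hPf
  have hQg : Q g₂ g₁ := (hQ.dual.le_iff_of_forcingGraph_reachable hg).1 hQf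
  rcases hag with rfl | rfl
  · have hbg : b ≠ g₂ := by rintro rfl; exact hgG.ne (hQ.antisymm hQe hQg)
    have hbg' : G.Adj b g₂ := by
      by_contra hn
      have hforce : (forcingGraph G).Adj (a, g₂) (a, b) :=
        forcingGraph_adj.2 ⟨hgG, he, .inl ⟨rfl, hbg.symm, fun h => hn h.symm⟩⟩
      exact he.ne (hQ.antisymm hQe
        ((hQ.dual.le_iff_of_forcingGraph_reachable (hg.trans hforce.reachable)).1 hQf))
    rcases hP.le_or_le hbg' with hPbg | hPgb <;> rcases hQ.le_or_le hbg' with hQbg | hQgb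
    · exact hbg (hQ.antisymm hQbg (hQ.trans hQg hQe))
    · exact false_of_implClassVerts_eq_univ hP hQ.dual he hPe hQe hespan .rfl hPbg hQg
    · exact he.ne (hQ.antisymm hQe (hQ.trans hQbg hQg))
    · exact false_of_implClassVerts_eq_univ hP hQ hf hPf hQf hfspan hg hPgb hQe
  · have hPgb : P g₁ b := hP.trans hPg hPe
    have hbg : g₁ ≠ b := by rintro rfl; exact hgG.ne (hP.antisymm hPg hPe)
    rcases hQ.le_or_le (hP.adj hbg hPgb) with hQgb | hQbg
    · exact false_of_implClassVerts_eq_univ hP hQ hf hPf hQf hfspan hg hPe hQgb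
    · refine false_of_implClassVerts_eq_univ (e := (b, a)) hP.dual hQ he.symm hPe hQe ?_ .rfl
        hPg hQbg
      exact eq_univ_of_univ_subset (hespan ▸ implClassVerts_subset_swap)

end PrimeCase

theorem NDimRel.of_transOrientation_of_finite [Finite V] {G : SimpleGraph V}
    {P Q : V → V → Prop} (hP : TransOrientation G P) (hQ : TransOrientation G Q)
    (hdim : NDimRel n P) : NDimRel n Q := by
  induction hN : Nat.card V using Nat.strong_induction_on generalizing V with
  | _ N ih =>
  rcases subsingleton_or_nontrivial V with hV | hV
  · exact of_subsingleton hQ.refl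
  have hcomp : ∀ {Q'}, TransOrientation G Q' → ∀ H : SimpleGraph V, ¬H.Preconnected →
      ∀ C, NDimRel n (fun a b : {x // H.connectedComponentMk x = C} => Q' a b) := by
    intro Q' hQ' H hH C
    obtain ⟨x, hx⟩ : ∃ x, H.connectedComponentMk x ≠ C := by
      by_contra! h
      exact hH fun u v => SimpleGraph.ConnectedComponent.exact ((h u).trans (h v).symm)
    exact ih _ (hN ▸ Finite.card_subtype_lt hx) (hP.comap Subtype.val_injective)
      (hQ'.comap Subtype.val_injective) (hdim.comap Subtype.val_injective) rfl
  by_cases hF : (flipGraph P Q).Preconnected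
  swap
  · exact of_flipGraph_components hP hQ hdim (hcomp hQ _ hF)
  by_cases hA : (flipGraph P (swap Q)).Preconnected
  swap
  · exact (of_flipGraph_components hP hQ.dual hdim (hcomp hQ.dual _ hA)).dual
  by_cases hco : Gᶜ.Preconnected
  swap
  · refine of_compl_components hQ ?_ (hcomp hQ _ hco)
    rintro rfl
    obtain ⟨L, -, hL⟩ := hdim
    obtain ⟨x, y, hxy⟩ := exists_pair_ne V
    exact hxy (hP.antisymm ((hL x y).2 (·.elim0)) ((hL y x).2 (·.elim0)))
  exact (false_of_preconnected hP hQ hF hA hco).elim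

end

/-- Trotter–Moore–Sumner: if a graph has an `n`-dimensional transitive orientation,
then every transitive orientation of it is `n`-dimensional. -/
theorem trotter_moore_sumner {V : Type u} (G : SimpleGraph V) (n : ℕ)
    (le₁ : V → V → Prop) (h₁ : TransOrientation G le₁) (hdim : NDimRel n le₁) :
    ∀ le₂ : V → V → Prop, TransOrientation G le₂ → NDimRel n le₂ := fun _ h₂ =>
  NDimRel.of_forall_finset fun _ => NDimRel.of_transOrientation_of_finite
    (h₁.comap Subtype.val_injective) (h₂.comap Subtype.val_injective)
    (hdim.comap Subtype.val_injective)
end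

section
/- A graph G is a 2-dimensional comparability graph if and only if both G and its complement are comparability graphs. That is, there exists a partial order on the vertex set V, whose comparability relation between distinct vertices equals the edge relation of G, that is the intersection of 2 linear orders on V, if and only if both G and its complement graph admit transitive orientations. -/
universe u

/-- Auxiliary: the union of two "compatible" strict orders is a strict total order,
packaged as a linear order after adding reflexivity. -/
lemma ple_aux {V : Type u} (p q : V → V → Prop)
    (hpt : ∀ x y z, p x y → p y z → p x z)
    (hqt : ∀ x y z, q x y → q y z → q x z)
    (hpa : ∀ x y, p x y → ¬ p y x)
    (hqa : ∀ x y, q x y → ¬ q y x)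
    (hpq : ∀ x y, p x y → ¬ q x y)
    (hpq' : ∀ x y, p x y → ¬ q y x)
    (htot : ∀ x y, x ≠ y → p x y ∨ p y x ∨ q x y ∨ q y x) :
    IsLinearOrder V (fun x y => x = y ∨ p x y ∨ q x y) := by
  have strans : ∀ x y z, (p x y ∨ q x y) → (p y z ∨ q y z) → (p x z ∨ q x z) := by
    rintro x y z (h1 | h1) (h2 | h2)
    · exact Or.inl (hpt _ _ _ h1 h2)
    · -- p x y, q y z
      have hxz : x ≠ z := by rintro rfl; exact hpq' _ _ h1 h2
      rcases htot x z hxz with h | h | h | h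
      · exact Or.inl h
      · exact absurd h2 (hpq' _ _ (hpt _ _ _ h h1))
      · exact Or.inr h
      · exact absurd h1 (fun hp => hpq' _ _ hp (hqt _ _ _ h2 h))
    · -- q x y, p y z
      have hxz : x ≠ z := by rintro rfl; exact hpq' _ _ h2 h1
      rcases htot x z hxz with h | h | h | h
      · exact Or.inl h
      · exact absurd h1 (fun hq => hpq' _ _ (hpt _ _ _ h2 h) hq)
      · exact Or.inr h
      · exact absurd h2 (fun hp => hpq' _ _ hp (hqt _ _ _ h h1))
    · exact Or.inr (hqt _ _ _ h1 h2)
  have sasym : ∀ x y, (p x y ∨ q x y) → ¬ (p y x ∨ q y x) := by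
    rintro x y (h1 | h1) (h2 | h2)
    · exact hpa _ _ h1 h2
    · exact hpq' _ _ h1 h2
    · exact hpq' _ _ h2 h1
    · exact hqa _ _ h1 h2
  refine { refl := fun x => Or.inl rfl, trans := ?_, antisymm := ?_, total := ?_ }
  · rintro x y z (rfl | h1) h2
    · exact h2
    · rcases h2 with rfl | h2
      · exact Or.inr h1
      · exact Or.inr (strans _ _ _ h1 h2)
  · rintro x y (rfl | h1) h2
    · rfl
    · rcases h2 with rfl | h2
      · rfl
      · exact absurd h2 (sasym _ _ h1)
  · intro x y
    by_cases hxy : x = y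
    · exact Or.inl (Or.inl hxy)
    · rcases htot x y hxy with h | h | h | h
      · exact Or.inl (Or.inr (Or.inl h))
      · exact Or.inr (Or.inr (Or.inl h))
      · exact Or.inl (Or.inr (Or.inr h))
      · exact Or.inr (Or.inr (Or.inr h))

/-- Pnueli–Lempel–Even: a graph is a 2-dimensional comparability graph if and only if
both it and its complement are comparability graphs. -/
theorem pnueli_lempel_even {V : Type u} (G : SimpleGraph V) :
    (∃ le : V → V → Prop, TransOrientation G le ∧ NDimRel 2 le) ↔
      ((∃ le : V → V → Prop, TransOrientation G le) ∧
       (∃ le : V → V → Prop, TransOrientation Gᶜ le)) := by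
  constructor
  · rintro ⟨le, hT, L, hL, hle⟩
    refine ⟨⟨le, hT⟩, ⟨fun x y => L 0 x y ∧ L 1 y x, ?_, ?_⟩⟩
    · -- partial order
      refine { refl := fun x => ⟨(hL 0).refl x, (hL 1).refl x⟩, trans := ?_, antisymm := ?_ }
      · rintro x y z ⟨h1, h2⟩ ⟨h3, h4⟩
        exact ⟨(hL 0).trans _ _ _ h1 h3, (hL 1).trans _ _ _ h4 h2⟩
      · rintro x y ⟨h1, _⟩ ⟨h3, _⟩
        exact (hL 0).antisymm _ _ h1 h3
    · intro x y hxy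
      rw [SimpleGraph.compl_adj]
      have hadj := (hT.2 x y hxy)
      have h0 := (hL 0).total x y
      have h1 := (hL 1).total x y
      have h0' : ¬ (L 0 x y ∧ L 0 y x) := fun ⟨a, b⟩ => hxy ((hL 0).antisymm _ _ a b)
      have h1' : ¬ (L 1 x y ∧ L 1 y x) := fun ⟨a, b⟩ => hxy ((hL 1).antisymm _ _ a b)
      have e1 := hle x y
      have e2 := hle y x
      simp only [Fin.forall_fin_two] at e1 e2
      constructor
      · rintro ⟨-, hna⟩
        rw [hadj, e1, e2] at hna
        rcases h0 with a | a <;> rcases h1 with b | b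
        · exact absurd (Or.inl ⟨a, b⟩) hna
        · exact Or.inl ⟨a, b⟩
        · exact Or.inr ⟨a, b⟩
        · exact absurd (Or.inr ⟨a, b⟩) hna
      · intro h
        refine ⟨hxy, ?_⟩
        rw [hadj, e1, e2]
        rcases h with ⟨a, b⟩ | ⟨a, b⟩ <;> rintro (⟨c, d⟩ | ⟨c, d⟩)
        · exact h1' ⟨d, b⟩
        · exact h0' ⟨a, c⟩
        · exact h0' ⟨c, a⟩
        · exact h1' ⟨b, d⟩
  · rintro ⟨⟨P, ⟨hPo, hPadj⟩⟩, ⟨Q, ⟨hQo, hQadj⟩⟩⟩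
    set p : V → V → Prop := fun x y => P x y ∧ x ≠ y with hp
    set q : V → V → Prop := fun x y => Q x y ∧ x ≠ y with hq
    have hpt : ∀ x y z, p x y → p y z → p x z := by
      rintro x y z ⟨h1, h1'⟩ ⟨h2, h2'⟩
      refine ⟨hPo.trans _ _ _ h1 h2, ?_⟩
      rintro rfl
      exact h1' (hPo.antisymm _ _ h1 h2)
    have hqt : ∀ x y z, q x y → q y z → q x z := by
      rintro x y z ⟨h1, h1'⟩ ⟨h2, h2'⟩
      refine ⟨hQo.trans _ _ _ h1 h2, ?_⟩
      rintro rfl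
      exact h1' (hQo.antisymm _ _ h1 h2)
    have hpa : ∀ x y, p x y → ¬ p y x := by
      rintro x y ⟨h1, h1'⟩ ⟨h2, _⟩
      exact h1' (hPo.antisymm _ _ h1 h2)
    have hqa : ∀ x y, q x y → ¬ q y x := by
      rintro x y ⟨h1, h1'⟩ ⟨h2, _⟩
      exact h1' (hQo.antisymm _ _ h1 h2)
    have hadjp : ∀ x y, x ≠ y → (G.Adj x y ↔ p x y ∨ p y x) := by
      intro x y hxy
      rw [hPadj x y hxy]
      simp only [hp]
      constructor
      · rintro (h | h)
        · exact Or.inl ⟨h, hxy⟩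
        · exact Or.inr ⟨h, hxy.symm⟩
      · rintro (⟨h, -⟩ | ⟨h, -⟩)
        · exact Or.inl h
        · exact Or.inr h
    have hadjq : ∀ x y, x ≠ y → (¬ G.Adj x y ↔ q x y ∨ q y x) := by
      intro x y hxy
      have h := hQadj x y hxy
      rw [SimpleGraph.compl_adj] at h
      constructor
      · intro hn
        rcases h.1 ⟨hxy, hn⟩ with h' | h'
        · exact Or.inl ⟨h', hxy⟩
        · exact Or.inr ⟨h', hxy.symm⟩
      · rintro (⟨h', -⟩ | ⟨h', -⟩)
        · exact (h.2 (Or.inl h')).2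
        · exact (h.2 (Or.inr h')).2
    have hpq : ∀ x y, p x y → ¬ q x y := fun x y h1 h2 =>
      ((hadjq x y h1.2).2 (Or.inl h2)) ((hadjp x y h1.2).2 (Or.inl h1))
    have hpq' : ∀ x y, p x y → ¬ q y x := by
      intro x y h1 h2
      exact ((hadjq x y h1.2).2 (Or.inr h2)) ((hadjp x y h1.2).2 (Or.inl h1))
    have hpq2 : ∀ x y, p x y → ¬ (flip q) x y := fun x y h1 h2 => hpq' x y h1 h2
    have hpq2' : ∀ x y, p x y → ¬ (flip q) y x := fun x y h1 h2 => hpq x y h1 h2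
    have htot : ∀ x y, x ≠ y → p x y ∨ p y x ∨ q x y ∨ q y x := by
      intro x y hxy
      by_cases h : G.Adj x y
      · rcases (hadjp x y hxy).1 h with h' | h'
        · exact Or.inl h'
        · exact Or.inr (Or.inl h')
      · rcases (hadjq x y hxy).1 h with h' | h'
        · exact Or.inr (Or.inr (Or.inl h'))
        · exact Or.inr (Or.inr (Or.inr h'))
    have htot2 : ∀ x y, x ≠ y → p x y ∨ p y x ∨ (flip q) x y ∨ (flip q) y x := by
      intro x y hxy
      rcases htot x y hxy with h | h | h | h
      · exact Or.inl h
      · exact Or.inr (Or.inl h)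
      · exact Or.inr (Or.inr (Or.inr h))
      · exact Or.inr (Or.inr (Or.inl h))
    have hL0 := ple_aux p q hpt hqt hpa hqa hpq hpq' htot
    have hL1 := ple_aux p (flip q) hpt (fun x y z h1 h2 => hqt z y x h2 h1) hpa
      (fun x y h1 h2 => hqa y x h1 h2) hpq2 hpq2' htot2
    refine ⟨P, ⟨hPo, hPadj⟩, ![fun x y => x = y ∨ p x y ∨ q x y,
      fun x y => x = y ∨ p x y ∨ (flip q) x y], ?_, ?_⟩
    · intro i
      fin_cases i
      · exact hL0
      · exact hL1
    · intro x y
      simp only [Fin.forall_fin_two, Matrix.cons_val_zero, Matrix.cons_val_one,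
        Matrix.head_cons]
      have hPiff : P x y ↔ (x = y ∨ p x y) := by
        constructor
        · intro h
          by_cases hxy : x = y
          · exact Or.inl hxy
          · exact Or.inr ⟨h, hxy⟩
        · rintro (rfl | ⟨h, -⟩)
          · exact hPo.refl x
          · exact h
      rw [hPiff]
      constructor
      · rintro (rfl | h)
        · exact ⟨Or.inl rfl, Or.inl rfl⟩
        · exact ⟨Or.inr (Or.inl h), Or.inr (Or.inl h)⟩
      · rintro ⟨rfl | (h1 | h1), h2⟩
        · exact Or.inl rfl
        · exact Or.inr h1
        · rcases h2 with rfl | (h2 | h2)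
          · exact Or.inl rfl
          · exact Or.inr h2
          · exact absurd h2 (hqa _ _ h1)
end

section
/- Assume that for every 2-dimensional poset P, if every subset of P of cardinality ℵ1 is the union of countably many chains, then P is the union of countably many chains. Then for every positive integer n and every n-dimensional poset P, if every subset of P of cardinality ℵ1 is the union of countably many chains, then P is the union of countably many chains. -/
/-!
Induct on the dimension. If the order of `P` is the intersection of linear orders
`≤₀, …, ≤ₙ`, the intersection `≤'` of `≤₁, …, ≤ₙ` is an `n`-dimensional order that is weaker
than `≤`, so it inherits the hypothesis on `ℵ₁`-sized subsets and, by induction, `P` is a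
countable union of `≤'`-chains. On each such chain the order of `P` is the intersection of the
two linear orders `≤₀` and `≤'`, so the 2-dimensional case covers it by countably many chains,
and countably many countable chain covers combine into one.
-/

open Cardinal

universe u

/-- A poset is `n`-dimensional if its order relation is the intersection of `n`
linear orders on its underlying set. -/
def NDim (n : ℕ) (P : Type u) [PartialOrder P] : Prop :=
  ∃ le : Fin n → (P → P → Prop), (∀ i, IsLinearOrder P (le i)) ∧
    ∀ x y : P, x ≤ y ↔ ∀ i, le i x y

open Set

def AlephOneChainCovered (P : Type u) [PartialOrder P] : Prop :=
  ∀ Q : Set P, #Q = aleph 1 → CtblChainCover Q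

def ChainCoverReflecting (P : Type u) [PartialOrder P] : Prop :=
  AlephOneChainCovered P → CtblChainCover (univ : Set P)

section ChainCover

variable {P R : Type u} [PartialOrder P] [PartialOrder R]

theorem ctblChainCover_iff {S : Set P} :
    CtblChainCover S ↔ ∃ C : ℕ → Set P, (∀ k, IsChain (· ≤ ·) (C k)) ∧ S ⊆ ⋃ k, C k := by
  constructor
  · rintro ⟨f, hf⟩
    refine ⟨fun k => Subtype.val '' (f ⁻¹' {k}), fun k => ?_, fun x hx => ?_⟩
    · rintro _ ⟨x, hx, rfl⟩ _ ⟨y, hy, rfl⟩ -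
      exact hf x y (hx.trans hy.symm)
    · exact mem_iUnion.2 ⟨f ⟨x, hx⟩, ⟨x, hx⟩, rfl, rfl⟩
  · rintro ⟨C, hC, hS⟩
    choose k hk using fun x : S => mem_iUnion.1 (hS x.2)
    exact ⟨k, fun x y hxy => (hC (k y)).total (hxy ▸ hk x) (hk y)⟩

theorem IsChain.ctblChainCover {S : Set P} (hS : IsChain (· ≤ ·) S) : CtblChainCover S :=
  ctblChainCover_iff.2 ⟨fun _ => S, fun _ => hS, subset_iUnion_of_subset 0 subset_rfl⟩

theorem CtblChainCover.mono {S T : Set P} (hST : S ⊆ T) (hT : CtblChainCover T) :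
    CtblChainCover S := by
  obtain ⟨C, hC, hT⟩ := ctblChainCover_iff.1 hT
  exact ctblChainCover_iff.2 ⟨C, hC, hST.trans hT⟩

theorem CtblChainCover.iUnion {S : ℕ → Set P} (hS : ∀ k, CtblChainCover (S k)) :
    CtblChainCover (⋃ k, S k) := by
  choose C hC hSC using fun k => ctblChainCover_iff.1 (hS k)
  refine ctblChainCover_iff.2
    ⟨fun m => C m.unpair.1 m.unpair.2, fun m => hC _ _, iUnion_subset fun k x hx => ?_⟩
  obtain ⟨j, hj⟩ := mem_iUnion.1 (hSC k hx)
  exact mem_iUnion.2 ⟨Nat.pair k j, by simpa using hj⟩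

theorem CtblChainCover.image {S : Set R} (hS : CtblChainCover S) (f : R → P) (hf : Monotone f) :
    CtblChainCover (f '' S) := by
  obtain ⟨C, hC, hSC⟩ := ctblChainCover_iff.1 hS
  refine ctblChainCover_iff.2 ⟨fun k => f '' C k, fun k => hf.isChain_image (hC k), ?_⟩
  rw [← image_iUnion]
  exact image_mono hSC

theorem CtblChainCover.preimage {S : Set P} (hS : CtblChainCover S) (f : R → P)
    (hf : ∀ a b, f a ≤ f b → a ≤ b) : CtblChainCover (f ⁻¹' S) := by
  obtain ⟨g, hg⟩ := hS
  exact ⟨fun x => g ⟨f x, x.2⟩, fun x y hxy => (hg _ _ hxy).imp (hf _ _) (hf _ _)⟩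

end ChainCover

section Dimension

variable {P : Type u}

theorem AlephOneChainCovered.comap {R : Type u} [PartialOrder P] [PartialOrder R]
    (hP : AlephOneChainCovered P) (f : R → P) (hinj : Function.Injective f)
    (hf : ∀ a b, f a ≤ f b → a ≤ b) : AlephOneChainCovered R := fun Q hQ => by
  simpa [hinj.preimage_image] using
    (hP (f '' Q) (by rw [mk_image_eq hinj, hQ])).preimage f hf

theorem IsChain.isLinearOrder_subtype {r : P → P → Prop} [IsPartialOrder P r] {S : Set P}
    (hS : IsChain r S) : IsLinearOrder S (fun a b => r a b) where
  refl a := refl_of r a.1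
  trans _ _ _ := trans_of r
  antisymm _ _ hab hba := Subtype.ext (antisymm_of r hab hba)
  total a b := hS.total a.2 b.2

theorem isChain_univ_of_nDim_one [PartialOrder P] (hP : NDim 1 P) :
    IsChain (· ≤ ·) (univ : Set P) := by
  obtain ⟨le, hlin, hle⟩ := hP
  intro x _ y _ _
  simp only [hle, Fin.forall_fin_one]
  exact total_of (le 0) x y

theorem nDim_two_of_isChain [PartialOrder P] (l r : P → P → Prop) [IsLinearOrder P l]
    [IsPartialOrder P r] (hle : ∀ x y : P, x ≤ y ↔ l x y ∧ r x y) {S : Set P}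
    (hS : IsChain r S) : NDim 2 S := by
  have hl : IsChain l S := fun x _ y _ _ => total_of l x y
  refine ⟨![fun a b => l a b, fun a b => r a b], Fin.forall_fin_two.2
    ⟨hl.isLinearOrder_subtype, hS.isLinearOrder_subtype⟩, fun a b => ?_⟩
  simp [Fin.forall_fin_two, ← Subtype.coe_le_coe, hle]

def interRel {ι : Type*} (le : ι → P → P → Prop) (x y : P) : Prop := ∀ i, le i x y

instance {ι : Type*} [Nonempty ι] (le : ι → P → P → Prop) [∀ i, IsPartialOrder P (le i)] :
    IsPartialOrder P (interRel le) where
  refl x i := refl_of (le i) x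
  trans _ _ _ hxy hyz i := trans_of (le i) (hxy i) (hyz i)
  antisymm _ _ hxy hyx := antisymm_of (le (Classical.arbitrary ι)) (hxy _) (hyx _)

def InterOrder {ι : Type*} (_le : ι → P → P → Prop) : Type u := P

instance {ι : Type*} [Nonempty ι] (le : ι → P → P → Prop) [∀ i, IsPartialOrder P (le i)] :
    PartialOrder (InterOrder le) where
  le := interRel le
  le_refl := refl_of (interRel le)
  le_trans _ _ _ := trans_of (interRel le)
  le_antisymm _ _ := antisymm_of (interRel le)

theorem nDim_interOrder {n : ℕ} [NeZero n] (le : Fin n → P → P → Prop)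
    [∀ i, IsLinearOrder P (le i)] : NDim n (InterOrder le) :=
  ⟨le, fun i => (inferInstance : IsLinearOrder P (le i)), fun _ _ => Iff.rfl⟩

theorem chainCoverReflecting_of_nDim_succ {n : ℕ} (hn : 0 < n)
    (h2 : ∀ (P : Type u) [PartialOrder P], NDim 2 P → ChainCoverReflecting P)
    (ih : ∀ (P : Type u) [PartialOrder P], NDim n P → ChainCoverReflecting P)
    [PartialOrder P] (hP : NDim (n + 1) P) : ChainCoverReflecting P := by
  intro hQ
  obtain ⟨le, hlin, hle⟩ := hP
  have : NeZero n := ⟨hn.ne'⟩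
  let tail := fun i : Fin n => le i.succ
  have hle' : ∀ x y : P, x ≤ y ↔ le 0 x y ∧ interRel tail x y := by
    simp [hle, Fin.forall_fin_succ, interRel, tail]
  obtain ⟨C, hC, hcover⟩ : ∃ C : ℕ → Set P,
      (∀ k, IsChain (interRel tail) (C k)) ∧ Set.univ ⊆ ⋃ k, C k :=
    ctblChainCover_iff.1 <| ih (InterOrder tail) (nDim_interOrder tail)
    (hQ.comap (id : InterOrder tail → P) Function.injective_id fun a b hab => ((hle' a b).1 hab).2)
  refine (CtblChainCover.iUnion fun k => ?_).mono hcover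
  have h2k := h2 _ (nDim_two_of_isChain (le 0) (interRel tail) hle' (hC k))
    (hQ.comap Subtype.val Subtype.val_injective fun _ _ => id)
  simpa using h2k.image Subtype.val fun _ _ => id

end Dimension

/-- If chain-cover reflection holds for all 2-dimensional posets, then it holds for
all `n`-dimensional posets, for every positive integer `n`. -/
theorem twoDim_to_finite_dim_chain_reflection
    (h2 : ∀ (P : Type u) [PartialOrder P], NDim 2 P →
      (∀ Q : Set P, #Q = aleph 1 → CtblChainCover Q) →
        CtblChainCover (Set.univ : Set P)) :
    ∀ (n : ℕ), 0 < n → ∀ (P : Type u) [PartialOrder P], NDim n P →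
      (∀ Q : Set P, #Q = aleph 1 → CtblChainCover Q) →
        CtblChainCover (Set.univ : Set P) := by
  intro n hn
  induction n, hn using Nat.le_induction with
  | base => exact fun P _ hP _ => (isChain_univ_of_nDim_one hP).ctblChainCover
  | succ n hn ih => exact fun P _ => chainCoverReflecting_of_nDim_succ hn h2 ih
end

section
/- Assume that for every 2-dimensional poset P, if every subset of P of cardinality ℵ1 is the union of countably many antichains, then P is the union of countably many antichains. Then for every tree T, if every subset of T of cardinality ℵ1 is the union of countably many antichains, then T is the union of countably many antichains. -/
open Cardinal

universe u

/-!
A tree is 2-dimensional, so the hypothesis applies to it verbatim.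

To realize a tree `T` as an intersection of two linear orders, fix an injection `e` of `T` into
a linear order and encode a node `x` by the function sending each ordinal `α` to `e` of the node
of height `α` below `x` (or to `⊥` if there is none). The lexicographic order on these codes
extends the tree order, and compares two incomparable nodes as `e` compares the first nodes of
their branches that are not below the other one; these two nodes have the same strict
predecessors, hence the same height, and that height is the first level where the codes differ.
Reversing the order on the values of `e` reverses exactly the incomparable pairs.
-/

open Function

lemma TwoDim.of_le_iff {P : Type u} [PartialOrder P] {β₁ β₂ : Type*} [LinearOrder β₁]
    [LinearOrder β₂] {f₁ : P → β₁} {f₂ : P → β₂} (hf₁ : Injective f₁)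
    (hf₂ : Injective f₂) (h : ∀ x y, x ≤ y ↔ f₁ x ≤ f₁ y ∧ f₂ x ≤ f₂ y) : TwoDim P :=
  ⟨onFun (· ≤ ·) f₁, onFun (· ≤ ·) f₂, hf₁.isLinearOrder_onFun _, hf₂.isLinearOrder_onFun _, h⟩

namespace TreeOrder

variable {T : Type u} [PartialOrder T]

lemma le_total_of_le_of_le (hchain : ∀ v : T, IsChain (· ≤ ·) (Set.Iio v)) {u v x : T}
    (hu : u ≤ x) (hv : v ≤ x) : u ≤ v ∨ v ≤ u := by
  rcases hu.lt_or_eq with hu | rfl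
  · rcases hv.lt_or_eq with hv | rfl
    · rcases eq_or_ne u v with rfl | hne
      · exact Or.inl le_rfl
      · exact hchain x hu hv hne
    · exact Or.inl hu.le
  · exact Or.inr hv

structure IsSplit (x y m : T) : Prop where
  le : m ≤ x
  not_le : ¬ m ≤ y
  le_of_lt : ∀ w < m, w ≤ y

lemma IsSplit.lt_iff (hchain : ∀ v : T, IsChain (· ≤ ·) (Set.Iio v)) {x y m w : T}
    (hm : IsSplit x y m) : w < m ↔ w ≤ x ∧ w ≤ y := by
  refine ⟨fun hw => ⟨hw.le.trans hm.le, hm.le_of_lt w hw⟩, fun ⟨hwx, hwy⟩ => ?_⟩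
  have hmw : ¬ m ≤ w := fun hmw => hm.not_le (hmw.trans hwy)
  exact lt_of_le_not_ge ((le_total_of_le_of_le hchain hwx hm.le).resolve_right hmw) hmw

variable [WellFoundedLT T]

lemma exists_isSplit {x y : T} (h : ¬ x ≤ y) : ∃ m, IsSplit x y m := by
  obtain ⟨m, ⟨hmx, hmy⟩, hmin⟩ := wellFounded_lt.has_min {u | u ≤ x ∧ ¬ u ≤ y} ⟨x, le_rfl, h⟩
  exact ⟨m, hmx, hmy, fun w hw => by_contra fun hwy => hmin w ⟨hw.le.trans hmx, hwy⟩ hw⟩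

noncomputable def height (x : T) : Ordinal.{u} :=
  IsWellFounded.rank (· < ·) x

lemma height_strictMono : StrictMono (height (T := T)) :=
  WellFoundedLT.rank_strictMono

lemma height_eq_of_lt_iff {x y : T} (h : ∀ w, w < x ↔ w < y) : height x = height y := by
  have hpred : (· < x) = (· < y) := funext fun w => propext (h w)
  unfold height
  rw [IsWellFounded.rank_eq, IsWellFounded.rank_eq, hpred]

lemma eq_of_height_eq (hchain : ∀ v : T, IsChain (· ≤ ·) (Set.Iio v)) {u v x : T}
    (hu : u ≤ x) (hv : v ≤ x) (h : height u = height v) : u = v := by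
  rcases le_total_of_le_of_le hchain hu hv with huv | hvu
  · exact huv.eq_or_lt.resolve_right fun hlt => (height_strictMono hlt).ne h
  · exact (hvu.eq_or_lt.resolve_right fun hlt => (height_strictMono hlt).ne h.symm).symm

open Classical in
noncomputable def branch (x : T) (α : Ordinal.{u}) : WithBot T :=
  if h : ∃ u ≤ x, height u = α then h.choose else ⊥

lemma branch_eq_coe_iff (hchain : ∀ v : T, IsChain (· ≤ ·) (Set.Iio v)) {x u : T}
    {α : Ordinal.{u}} : branch x α = u ↔ u ≤ x ∧ height u = α := by
  unfold branch
  split_ifs with h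
  · obtain ⟨hle, hheight⟩ := h.choose_spec
    refine ⟨fun hu => WithBot.coe_injective hu ▸ ⟨hle, hheight⟩, fun ⟨hu, hα⟩ => ?_⟩
    rw [eq_of_height_eq hchain hle hu (hheight.trans hα.symm)]
  · exact ⟨fun h' => absurd h' WithBot.bot_ne_coe, fun hu => absurd ⟨u, hu⟩ h⟩

lemma branch_height (hchain : ∀ v : T, IsChain (· ≤ ·) (Set.Iio v)) {u x : T}
    (hu : u ≤ x) : branch x (height u) = u :=
  (branch_eq_coe_iff hchain).2 ⟨hu, rfl⟩

lemma branch_eq_of_le (hchain : ∀ v : T, IsChain (· ≤ ·) (Set.Iio v)) {x y u : T}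
    {α : Ordinal.{u}} (hxy : x ≤ y) (hu : branch x α = u) : branch y α = u := by
  obtain ⟨hux, rfl⟩ := (branch_eq_coe_iff hchain).1 hu
  exact branch_height hchain (hux.trans hxy)

namespace IsSplit

variable {x y m : T}

lemma height_eq (hchain : ∀ v : T, IsChain (· ≤ ·) (Set.Iio v)) {n : T}
    (hm : IsSplit x y m) (hn : IsSplit y x n) : height m = height n :=
  height_eq_of_lt_iff fun w => by rw [hm.lt_iff hchain, hn.lt_iff hchain, and_comm]

lemma branch_eq_of_lt_height (hchain : ∀ v : T, IsChain (· ≤ ·) (Set.Iio v))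
    (hm : IsSplit x y m) {u : T} {α : Ordinal.{u}} (hu : branch x α = u) (hα : α < height m) :
    branch y α = u := by
  obtain ⟨hux, rfl⟩ := (branch_eq_coe_iff hchain).1 hu
  have hmu : ¬ m ≤ u := fun hmu => hα.not_ge (height_strictMono.monotone hmu)
  have hum : u < m :=
    lt_of_le_not_ge ((le_total_of_le_of_le hchain hux hm.le).resolve_right hmu) hmu
  exact branch_height hchain (hm.le_of_lt u hum)

lemma branch_eq_branch (hchain : ∀ v : T, IsChain (· ≤ ·) (Set.Iio v)) {n : T}
    (hm : IsSplit x y m) (hn : IsSplit y x n) {α : Ordinal.{u}} (hα : α < height m) :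
    branch x α = branch y α := by
  cases hx : branch x α with
  | coe u => exact (hm.branch_eq_of_lt_height hchain hx hα).symm
  | bot =>
    cases hy : branch y α with
    | bot => rfl
    | coe v =>
      rw [hn.branch_eq_of_lt_height hchain hy (hα.trans_eq (hm.height_eq hchain hn))] at hx
      exact (WithBot.coe_ne_bot hx).elim

end IsSplit

variable {β : Type*} [LinearOrder β]

noncomputable def lexBranch (e : T → β) (x : T) : Lex (Ordinal.{u} → WithBot β) :=
  toLex fun α => (branch x α).map e

lemma lexBranch_strictMono (hchain : ∀ v : T, IsChain (· ≤ ·) (Set.Iio v)) (e : T → β) :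
    StrictMono (lexBranch e) := by
  intro x y hxy
  refine Pi.lex_lt_of_lt wellFounded_lt (Pi.lt_def.2 ⟨fun α => ?_, height y, ?_⟩)
  · change (branch x α).map e ≤ (branch y α).map e
    cases hx : branch x α with
    | bot => exact bot_le
    | coe u => rw [branch_eq_of_le hchain hxy.le hx]
  · change (branch x (height y)).map e < (branch y (height y)).map e
    rw [branch_height hchain le_rfl]
    cases hx : branch x (height y) with
    | bot => exact WithBot.bot_lt_coe _
    | coe u =>
      obtain ⟨hux, hu⟩ := (branch_eq_coe_iff hchain).1 hx
      exact ((height_strictMono (hux.trans_lt hxy)).ne hu).elim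

lemma lexBranch_lt_of_isSplit (hchain : ∀ v : T, IsChain (· ≤ ·) (Set.Iio v))
    {e : T → β} {x y m n : T} (hm : IsSplit x y m) (hn : IsSplit y x n) (h : e m < e n) :
    lexBranch e x < lexBranch e y := by
  refine ⟨height m, fun α hα => ?_, ?_⟩
  · simp only [lexBranch, Pi.toLex_apply, hm.branch_eq_branch hchain hn hα]
  · rw [lexBranch, lexBranch, Pi.toLex_apply, Pi.toLex_apply, branch_height hchain hm.le,
      hm.height_eq hchain hn, branch_height hchain hn.le]
    exact WithBot.coe_lt_coe.2 h

lemma lexBranch_injective (hchain : ∀ v : T, IsChain (· ≤ ·) (Set.Iio v)) {e : T → β}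
    (he : Injective e) : Injective (lexBranch e) := by
  intro x y hxy
  by_contra hne
  by_cases hxy' : x ≤ y
  · exact (lexBranch_strictMono hchain e (hxy'.lt_of_ne hne)).ne hxy
  by_cases hyx : y ≤ x
  · exact (lexBranch_strictMono hchain e (hyx.lt_of_ne (Ne.symm hne))).ne' hxy
  obtain ⟨m, hm⟩ := exists_isSplit hxy'
  obtain ⟨n, hn⟩ := exists_isSplit hyx
  rcases (he.ne fun h => hm.not_le (h ▸ hn.le) : e m ≠ e n).lt_or_gt with hlt | hgt
  · exact (lexBranch_lt_of_isSplit hchain hm hn hlt).ne hxy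
  · exact (lexBranch_lt_of_isSplit hchain hn hm hgt).ne' hxy

lemma le_of_lexBranch_le (hchain : ∀ v : T, IsChain (· ≤ ·) (Set.Iio v)) {e : T → β}
    (he : Injective e) {x y : T} (h₁ : lexBranch e x ≤ lexBranch e y)
    (h₂ : lexBranch (OrderDual.toDual ∘ e) x ≤ lexBranch (OrderDual.toDual ∘ e) y) : x ≤ y := by
  by_contra hxy
  by_cases hyx : y ≤ x
  · exact (lexBranch_strictMono hchain e (lt_of_le_not_ge hyx hxy)).not_ge h₁
  obtain ⟨m, hm⟩ := exists_isSplit hxy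
  obtain ⟨n, hn⟩ := exists_isSplit hyx
  rcases (he.ne fun h => hm.not_le (h ▸ hn.le) : e m ≠ e n).lt_or_gt with hlt | hgt
  · have hlt' := (OrderDual.toDual_lt_toDual (a := e n) (b := e m)).2 hlt
    exact (lexBranch_lt_of_isSplit hchain hn hm hlt').not_ge h₂
  · exact (lexBranch_lt_of_isSplit hchain hn hm hgt).not_ge h₁

end TreeOrder

theorem IsTreeOrder.twoDim {T : Type u} [PartialOrder T] (hT : IsTreeOrder T) : TwoDim T := by
  have : WellFoundedLT T := ⟨hT.1⟩
  have he := (embeddingToCardinal (α := T)).injective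
  refine TwoDim.of_le_iff (TreeOrder.lexBranch_injective hT.2 he)
    (TreeOrder.lexBranch_injective hT.2 (OrderDual.toDual.injective.comp he)) fun x y =>
      ⟨fun h => ⟨?_, ?_⟩, fun h => TreeOrder.le_of_lexBranch_le hT.2 he h.1 h.2⟩
  all_goals exact (TreeOrder.lexBranch_strictMono hT.2 _).monotone h

/-- If antichain-cover reflection at `ℵ₁` holds for all 2-dimensional posets, then
it holds for all trees. -/
theorem twoDim_antichain_reflection_implies_tree_reflection
    (h2 : ∀ (P : Type u) [PartialOrder P], TwoDim P →
      (∀ Q : Set P, #Q = aleph 1 → CtblAntichainCover Q) →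
        CtblAntichainCover (Set.univ : Set P)) :
    ∀ (T : Type u) [PartialOrder T], IsTreeOrder T →
      (∀ Q : Set T, #Q = aleph 1 → CtblAntichainCover Q) →
        CtblAntichainCover (Set.univ : Set T) :=
  fun T _ hT => h2 T hT.twoDim
end

section
/- Every tree is a 2-dimensional poset: if (V, ⊴) is a tree, then there exist linear orders ≤₁ and ≤₂ on V such that for all x, y ∈ V, x ⊴ y if and only if x ≤₁ y and x ≤₂ y. -/
universe u

/-!
Code each vertex `x` of a tree by the partial function sending an ordinal `α` to the
predecessor of `x` at height `α`; its domain is the initial segment `[0, height x]`, and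
`x ≤ y` exactly when the code of `y` extends that of `x`. Fix an injection `e` of the
vertices into a linear order and compare codes lexicographically, an undefined value
counting as smallest, once through `e` and once through `e` reversed. Extension gives
`≤` in both orders. Conversely, two codes first differ at one and the same height in
both orders; if both values there were defined they would be compared oppositely,
so the smaller code is undefined there, hence also above it, and is extended by the
larger one.
-/

open Function OrderDual

section LexCode

variable {ι α β : Type*}

def lexCode (e : α → β) (s : ι → WithBot α) : Lex (ι → WithBot β) :=
  toLex fun i => (s i).map e

lemma lexCode_injective {e : α → β} (he : Injective e) :
    Injective (lexCode (ι := ι) e) :=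
  fun _ _ h => funext fun i => WithBot.map_injective he (congr_fun h i)

variable [PartialOrder β]

lemma WithBot.eq_bot_of_map_lt_of_map_toDual_lt {e : α → β} {a b : WithBot α}
    (h : a.map e < b.map e) (hd : a.map (toDual ∘ e) < b.map (toDual ∘ e)) : a = ⊥ := by
  cases a with
  | bot => rfl
  | coe a =>
    cases b with
    | bot => exact absurd h (not_lt_bot (a := ((a : WithBot α).map e)))
    | coe b =>
      simp only [WithBot.map_coe, WithBot.coe_lt_coe, comp_apply, toDual_lt_toDual] at h hd
      exact absurd h hd.asymm

variable [LinearOrder ι]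

lemma extends_of_lexCode_le {e : α → β} (he : Injective e) {s t : ι → WithBot α}
    (hs : ∀ i j, i ≤ j → s i = ⊥ → s j = ⊥)
    (h : lexCode e s ≤ lexCode e t) (hd : lexCode (toDual ∘ e) s ≤ lexCode (toDual ∘ e) t) :
    ∀ i (a : α), s i = a → t i = a := by
  intro i a hi
  obtain rfl | hne := eq_or_ne s t
  · exact hi
  obtain ⟨k, hk, hlt⟩ := h.lt_of_ne ((lexCode_injective he).ne hne)
  obtain ⟨k', hk', hlt'⟩ := hd.lt_of_ne ((lexCode_injective (toDual.injective.comp he)).ne hne)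
  -- `k` and `k'` are both the first index at which `s` and `t` differ
  obtain rfl : k = k' := by
    by_contra hkk
    rcases lt_or_gt_of_ne hkk with hkk | hkk
    · exact hlt.ne (congr_arg (WithBot.map e)
        (WithBot.map_injective (toDual.injective.comp he) (hk' k hkk)))
    · exact hlt'.ne (congr_arg (WithBot.map (toDual ∘ e))
        (WithBot.map_injective he (hk k' hkk)))
  have hsk : s k = ⊥ := WithBot.eq_bot_of_map_lt_of_map_toDual_lt hlt hlt'
  have hik : i < k := lt_of_not_ge fun hki => by simp [hs k i hki hsk] at hi
  exact WithBot.map_injective he (hk i hik) ▸ hi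

variable [WellFoundedLT ι]

lemma lexCode_le_of_extends (e : α → β) {s t : ι → WithBot α}
    (hst : ∀ i (a : α), s i = a → t i = a) : lexCode e s ≤ lexCode e t := by
  refine Pi.toLex_monotone fun i => ?_
  cases hs : s i with
  | bot => exact bot_le
  | coe a => rw [hst i a hs]

end LexCode

section Tree

variable {V : Type u} [PartialOrder V]

lemma le_total_of_le_of_le (hch : ∀ v : V, IsChain (· ≤ ·) {u : V | u < v})
    {x u v : V} (hu : u ≤ x) (hv : v ≤ x) : u ≤ v ∨ v ≤ u := by
  rcases hu.eq_or_lt with rfl | hu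
  · exact .inr hv
  rcases hv.eq_or_lt with rfl | hv
  · exact .inl hu.le
  exact (hch x).total hu hv

variable [WellFoundedLT V]

noncomputable def height (v : V) : Ordinal.{u} :=
  IsWellFounded.rank (· < ·) v

lemma height_strictMono : StrictMono (height (V := V)) :=
  WellFoundedLT.rank_strictMono

lemma lt_height_iff {x : V} {o : Ordinal.{u}} : o < height x ↔ ∃ u < x, o ≤ height u := by
  rw [height, IsWellFounded.rank_eq, Ordinal.lt_iSup_iff]
  simp only [Order.lt_succ_iff, Subtype.exists, exists_prop]
  rfl

lemma exists_le_height_eq {x : V} {o : Ordinal.{u}} (ho : o ≤ height x) :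
    ∃ v ≤ x, height v = o := by
  induction x using WellFoundedLT.induction with
  | ind x ih =>
    obtain rfl | ho := ho.eq_or_lt
    · exact ⟨x, le_rfl, rfl⟩
    obtain ⟨u, hux, hou⟩ := lt_height_iff.1 ho
    obtain ⟨v, hvu, rfl⟩ := ih u hux hou
    exact ⟨v, hvu.trans hux.le, rfl⟩

lemma eq_of_le_of_le_of_height_eq (hch : ∀ v : V, IsChain (· ≤ ·) {u : V | u < v})
    {x u v : V} (hu : u ≤ x) (hv : v ≤ x) (huv : height u = height v) : u = v := by
  rcases le_total_of_le_of_le hch hu hv with h | h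
  · exact h.eq_of_not_lt fun h' => (height_strictMono h').ne huv
  · exact (h.eq_of_not_lt fun h' => (height_strictMono h').ne huv.symm).symm

open Classical in
noncomputable def levelAt (x : V) (o : Ordinal.{u}) : WithBot V :=
  if h : ∃ v ≤ x, height v = o then h.choose else ⊥

lemma levelAt_eq_coe_iff (hch : ∀ v : V, IsChain (· ≤ ·) {u : V | u < v})
    {x v : V} {o : Ordinal.{u}} : levelAt x o = v ↔ v ≤ x ∧ height v = o := by
  unfold levelAt
  split_ifs with h
  · obtain ⟨hvx, hvo⟩ := h.choose_spec
    refine ⟨fun hv => WithBot.coe_injective hv ▸ ⟨hvx, hvo⟩, fun ⟨hv, hvo'⟩ => ?_⟩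
    rw [eq_of_le_of_le_of_height_eq hch hvx hv (hvo.trans hvo'.symm)]
  · exact ⟨fun hv => absurd hv WithBot.bot_ne_coe, fun hv => absurd ⟨v, hv⟩ h⟩

lemma levelAt_eq_bot_iff {x : V} {o : Ordinal.{u}} : levelAt x o = ⊥ ↔ height x < o := by
  unfold levelAt
  split_ifs with h
  · obtain ⟨v, hvx, rfl⟩ := h
    simp only [WithBot.coe_ne_bot, false_iff, not_lt]
    exact height_strictMono.monotone hvx
  · simpa using fun ho => h (exists_le_height_eq ho)

lemma levelAt_extends_iff (hch : ∀ v : V, IsChain (· ≤ ·) {u : V | u < v}) {x y : V} :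
    (∀ o (v : V), levelAt x o = v → levelAt y o = v) ↔ x ≤ y := by
  simp only [levelAt_eq_coe_iff hch]
  exact ⟨fun h => (h _ x ⟨le_rfl, rfl⟩).1, fun hxy _ _ ⟨hvx, hvo⟩ => ⟨hvx.trans hxy, hvo⟩⟩

lemma levelAt_injective (hch : ∀ v : V, IsChain (· ≤ ·) {u : V | u < v}) :
    Injective (levelAt (V := V)) := fun _ _ h =>
  le_antisymm ((levelAt_extends_iff hch).1 fun _ _ => h ▸ id)
    ((levelAt_extends_iff hch).1 fun _ _ => h ▸ id)

end Tree

/-- Every tree is a 2-dimensional poset: its order is the intersection of two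
linear orders on its underlying set. -/
theorem tree_is_twoDim (V : Type u) [PartialOrder V] (htree : IsTreeOrder V) :
    ∃ le₁ le₂ : V → V → Prop, IsLinearOrder V le₁ ∧ IsLinearOrder V le₂ ∧
      ∀ x y : V, x ≤ y ↔ (le₁ x y ∧ le₂ x y) := by
  obtain ⟨hwf, hch⟩ := htree
  have : WellFoundedLT V := ⟨hwf⟩
  let e : V ↪ Cardinal.{u} := embeddingToCardinal
  have he : Injective (toDual ∘ e) := toDual.injective.comp e.injective
  refine ⟨(· ≤ ·) on fun x => lexCode e (levelAt x),
    (· ≤ ·) on fun x => lexCode (toDual ∘ e) (levelAt x),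
    ((lexCode_injective e.injective).comp (levelAt_injective hch)).isLinearOrder_onFun _,
    ((lexCode_injective he).comp (levelAt_injective hch)).isLinearOrder_onFun _,
    fun x y => ?_⟩
  have hdom : ∀ o o', o ≤ o' → levelAt x o = ⊥ → levelAt x o' = ⊥ := fun _ _ hoo' => by
    simpa only [levelAt_eq_bot_iff] using fun h => h.trans_le hoo'
  rw [← levelAt_extends_iff hch]
  exact ⟨fun h => ⟨lexCode_le_of_extends _ h, lexCode_le_of_extends _ h⟩,
    fun h => extends_of_lexCode_le e.injective hdom h.1 h.2⟩
end

section
/- If G = (V,E) is a graph and →E is a simplicial orientation of G, then the transitive closure ◁ of →E is a strict partial order on V that is ramified: for every v ∈ V, the set {u ∈ V : u ◁ v} is linearly ordered by ◁. -/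
open SimpleGraph

universe u

/-- An orientation of a graph: a choice of exactly one direction for each edge. -/
def IsOrientation {V : Type u} (G : SimpleGraph V) (r : V → V → Prop) : Prop :=
  (∀ u v : V, r u v → G.Adj u v) ∧
  (∀ u v : V, G.Adj u v → (r u v ∨ r v u)) ∧
  (∀ u v : V, ¬(r u v ∧ r v u))

/-- A simplicial orientation: an acyclic orientation such that the set of
in-neighbours of every vertex is a clique. -/
def IsSimplicialOrientation {V : Type u} (G : SimpleGraph V) (r : V → V → Prop) : Prop :=
  IsOrientation G r ∧ (∀ v : V, ¬ Relation.TransGen r v v) ∧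
    ∀ v : V, G.IsClique {u : V | r u v}

/-- Paths of a given length. -/
def iterR {V : Type u} (r : V → V → Prop) : ℕ → V → V → Prop
  | 0, u, v => r u v
  | n+1, u, v => ∃ x, iterR r n u x ∧ r x v

lemma iterR_transGen {V : Type u} (r : V → V → Prop) :
    ∀ {n : ℕ} {u v : V}, iterR r n u v → Relation.TransGen r u v := by
  intro n
  induction n with
  | zero => intro u v h; exact .single h
  | succ n ih => rintro u v ⟨x, hx, hxv⟩; exact (ih hx).tail hxv

lemma transGen_iterR {V : Type u} (r : V → V → Prop) {u v : V}
    (h : Relation.TransGen r u v) : ∃ n, iterR r n u v := by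
  induction h with
  | single h => exact ⟨0, h⟩
  | tail _ h ih => obtain ⟨n, hn⟩ := ih; exact ⟨n+1, _, hn, h⟩

lemma key_ramified {V : Type u} (G : SimpleGraph V) (r : V → V → Prop)
    (hr : IsSimplicialOrientation G r) :
    ∀ k n m (u w v : V), n + m = k → iterR r n u v → iterR r m w v →
      Relation.TransGen r u w ∨ u = w ∨ Relation.TransGen r w u := by
  obtain ⟨⟨hsub, htot, hasym⟩, hacyc, hclique⟩ := hr
  intro k
  induction k using Nat.strong_induction_on with
  | _ k ih =>
    intro n m u w v hk hn hm
    match n, m with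
    | 0, 0 =>
      by_cases huw : u = w
      · exact Or.inr (Or.inl huw)
      · rcases htot u w (hclique v hn hm huw) with h | h
        · exact Or.inl (.single h)
        · exact Or.inr (Or.inr (.single h))
    | 0, m+1 =>
      obtain ⟨b, hb, hbv⟩ := hm
      by_cases hub : u = b
      · subst hub; exact Or.inr (Or.inr (iterR_transGen r hb))
      · rcases htot u b (hclique v hn hbv hub) with h | h
        · exact ih m (by omega) 0 m u w b (by omega) h hb
        · exact Or.inr (Or.inr ((iterR_transGen r hb).tail h))
    | n+1, 0 =>
      obtain ⟨a, ha, hav⟩ := hn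
      by_cases haw : a = w
      · subst haw; exact Or.inl (iterR_transGen r ha)
      · rcases htot a w (hclique v hav hm haw) with h | h
        · exact Or.inl ((iterR_transGen r ha).tail h)
        · exact ih n (by omega) n 0 u w a (by omega) ha h
    | n+1, m+1 =>
      obtain ⟨a, ha, hav⟩ := hn
      obtain ⟨b, hb, hbv⟩ := hm
      by_cases hab : a = b
      · subst hab; exact ih (n + m) (by omega) n m u w a (by omega) ha hb
      · rcases htot a b (hclique v hav hbv hab) with h | h
        · exact ih (n + 1 + m) (by omega) (n+1) m u w b (by omega) ⟨a, ha, h⟩ hb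
        · exact ih (n + (m+1)) (by omega) n (m+1) u w a (by omega) ha ⟨b, hb, h⟩

/-- The transitive closure of a simplicial orientation of a graph is a ramified
strict partial order: the set of strict predecessors of every vertex is linearly
ordered by it. -/
theorem transGen_simplicial_orientation_ramified {V : Type u} (G : SimpleGraph V)
    (r : V → V → Prop) (hr : IsSimplicialOrientation G r) :
    IsStrictOrder V (Relation.TransGen r) ∧
      ∀ v u w : V, Relation.TransGen r u v → Relation.TransGen r w v →
        (Relation.TransGen r u w ∨ u = w ∨ Relation.TransGen r w u) := by
  constructor
  · exact { irrefl := hr.2.1, trans := fun a b c => Relation.TransGen.trans }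
  · intro v u w hu hw
    obtain ⟨n, hn⟩ := transGen_iterR r hu
    obtain ⟨m, hm⟩ := transGen_iterR r hw
    exact key_ramified G r hr (n + m) n m u w v rfl hn hm
end

section
/- Let ◁ be a ramified strict partial order on a set V such that the set {u ∈ V : u ◁ v} is countable for every v ∈ V. Then there is a partition V = ⋃_{n < ω} V_n into countably many pieces such that the restriction of ◁ to each V_n is well-founded (and hence each (V_n, ◁) is a tree of height at most ω1). -/
/-!
Fix a well-order of `V` and send each `v` to the least element `ℓ v`, in that order, of `v`
together with its `◁`-successors. If `u ◁ v`, every successor of `v` is one of `u`, so `ℓ` is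
monotone; and every `v` with `ℓ v = w` is `w` or a predecessor of `w`, so the fibres of `ℓ` are
countable. Colour each fibre injectively by `ℕ` and give `v` its colour in the fibre of `ℓ v`.
Along a descending sequence of one colour the levels decrease weakly, hence are eventually
constant in the well-order, and the sequence would then repeat an element.
-/

universe u

open Set

section

variable {V : Type*} {r : V → V → Prop}

def CountablyWellFoundedOn (r : V → V → Prop) (s : Set V) : Prop :=
  ∃ f : V → ℕ, ∀ n, (s ∩ f ⁻¹' {n}).WellFoundedOn r

theorem Set.Countable.countablyWellFoundedOn [IsStrictOrder V r] {s : Set V}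
    (hs : s.Countable) : CountablyWellFoundedOn r s := by
  obtain ⟨f, hf⟩ := countable_iff_exists_injOn.mp hs
  exact ⟨f, fun n => Subsingleton.wellFoundedOn
    fun a ha b hb => hf ha.1 hb.1 (ha.2.trans hb.2.symm)⟩

theorem CountablyWellFoundedOn.of_fibers {K : Type*} [PartialOrder K] [WellFoundedLT K]
    {s : Set V} (ℓ : V → K) (hℓ : ∀ a ∈ s, ∀ b ∈ s, r a b → ℓ a ≤ ℓ b)
    (h : ∀ x, CountablyWellFoundedOn r (s ∩ ℓ ⁻¹' {x})) : CountablyWellFoundedOn r s := by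
  choose F hF using h
  refine ⟨fun v => F (ℓ v) v, fun n => ?_⟩
  let R (x : K) (a b : V) : Prop :=
    r a b ∧ a ∈ s ∩ ℓ ⁻¹' {x} ∩ F x ⁻¹' {n} ∧ b ∈ s ∩ ℓ ⁻¹' {x} ∩ F x ⁻¹' {n}
  have hlex : WellFounded (PSigma.Lex (· < ·) R) :=
    wellFounded_lt.psigma_lex fun x => wellFoundedOn_iff.mp (hF x n)
  refine wellFoundedOn_iff.mpr <|
    Subrelation.wf ?_ (InvImage.wf (fun v => (⟨ℓ v, v⟩ : (_ : K) ×' V)) hlex)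
  rintro a b ⟨hab, ⟨has, han⟩, ⟨hbs, hbn⟩⟩
  rcases (hℓ a has b hbs hab).lt_or_eq with hlt | heq
  · exact PSigma.Lex.left _ _ hlt
  · change PSigma.Lex (· < ·) R (⟨ℓ a, a⟩ : (_ : K) ×' V) ⟨ℓ b, b⟩
    rw [heq]
    exact PSigma.Lex.right _ ⟨hab, ⟨⟨has, heq⟩, heq ▸ han⟩, ⟨⟨hbs, rfl⟩, hbn⟩⟩

end

theorem exists_monotone_countable_fibers {V : Type u} (r : V → V → Prop) [IsTrans V r]
    (hr : ∀ v, {u | r u v}.Countable) :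
    ∃ ℓ : V → Ordinal.{u}, (∀ a b, r a b → ℓ a ≤ ℓ b) ∧ ∀ x, (ℓ ⁻¹' {x}).Countable := by
  let ι := Ordinal.typein (WellOrderingRel : V → V → Prop)
  let up (v : V) : Set V := {w | v = w ∨ r v w}
  have hup (v : V) : (ι '' up v).Nonempty := ⟨ι v, v, Or.inl rfl, rfl⟩
  refine ⟨fun v => sInf (ι '' up v), fun a b hab => ?_, fun x => ?_⟩
  · refine csInf_le_csInf (OrderBot.bddBelow _) (hup b) (image_mono ?_)
    rintro w (rfl | hbw)
    exacts [Or.inr hab, Or.inr (_root_.trans hab hbw)]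
  · refine ((countable_singleton x).preimage (Ordinal.typein_injective WellOrderingRel)).biUnion
      (fun w _ => (hr w).insert w) |>.mono ?_
    rintro v rfl
    obtain ⟨w, hvw, hw⟩ := csInf_mem (hup v)
    exact mem_biUnion hw (hvw.elim Or.inl Or.inr)

theorem galvin_partition_general {V : Type u} (lt : V → V → Prop)
    (hso : IsStrictOrder V lt)
    (hctbl : ∀ v : V, {u : V | lt u v}.Countable) :
    ∃ f : V → ℕ, ∀ n : ℕ,
      ¬∃ g : ℕ → V, (∀ k, f (g k) = n) ∧ ∀ k, lt (g (k + 1)) (g k) := by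
  have := hso
  obtain ⟨ℓ, hℓ, hfib⟩ := exists_monotone_countable_fibers lt hctbl
  obtain ⟨f, hf⟩ := CountablyWellFoundedOn.of_fibers (s := univ) ℓ (fun a _ b _ => hℓ a b)
    fun x => ((hfib x).mono inter_subset_right).countablyWellFoundedOn
  refine ⟨f, fun n ⟨g, hgn, hg⟩ => ?_⟩
  exact (wellFounded_iff_isEmpty_descending_chain.mp (wellFoundedOn_iff.mp (hf n))).elim
    ⟨g, fun k => ⟨hg k, ⟨trivial, hgn (k + 1)⟩, ⟨trivial, hgn k⟩⟩⟩

/-- Galvin's lemma: if `◁` is a ramified strict partial order on `V` with all sets of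
strict predecessors countable, then `V` can be partitioned into countably many
pieces on each of which `◁` is well-founded (so each piece is a tree of height at
most `ω₁`). -/
theorem galvin_partition {V : Type u} (lt : V → V → Prop)
    (hso : IsStrictOrder V lt)
    (hram : ∀ v u w : V, lt u v → lt w v → (lt u w ∨ u = w ∨ lt w u))
    (hctbl : ∀ v : V, {u : V | lt u v}.Countable) :
    ∃ f : V → ℕ, ∀ n : ℕ,
      ¬∃ g : ℕ → V, (∀ k, f (g k) = n) ∧ ∀ k, lt (g (k + 1)) (g k) :=
  galvin_partition_general lt hso hctbl
end

section
/- Let G = (V,E) be a graph and let ◁ be a well-founded ramified strict partial order on V such that {u ∈ V : u ◁ v} is countable for every v ∈ V (so (V, ◁) is a tree of height at most ω1), and assume that any two adjacent vertices of G are ◁-comparable. Suppose Player II has a winning strategy in the game 𝔾_χ(G) of length ω1; that is, suppose there is a function σ assigning to every ordinal η < ω1 and every sequence ⟨v_α : α ≤ η⟩ of vertices a natural number, such that for every ω1-sequence ⟨v_α : α < ω1⟩ of vertices, setting c_α = σ(⟨v_β : β ≤ α⟩), we have c_α ≠ c_β whenever α < β < ω1 and v_α is adjacent to v_β in G. Then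 χ(G) ≤ ℵ0. -/
/-!
Give each vertex `v` its rank `ρ(v)` in the tree; countability of the predecessor sets makes
`ρ(v) < ω₁`. Player II's colour for `v` is the answer of the winning strategy at round `ρ(v)`
in the play that lists the branch below `v` in order and then `v` itself. If `u ◁ v`, the play
for `u` is an initial segment of the play for `v`, which plays `u` at round `ρ(u)` and `v` at
round `ρ(v)`; so an edge `uv` gets two different colours because the strategy wins.
-/

open Cardinal

universe u

/-- The set of ordinals below `ω₁`, used to index plays of length `ω₁`. -/
def OrdBelowOmega1 : Type (u + 1) :=
  {o : Ordinal.{u} // o < (aleph 1).ord}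

namespace IsWellFounded

variable {V : Type u} {r : V → V → Prop} [IsWellFounded V r]

theorem rank_lt_aleph_one_ord (hctbl : ∀ a, {b | r b a}.Countable) (a : V) :
    rank r a < (aleph 1).ord := by
  rw [ord_aleph]
  induction a using IsWellFounded.induction r with
  | ind a ih =>
    have : Countable {b // r b a} := (hctbl a).to_subtype
    rw [rank_eq]
    exact Ordinal.iSup_lt_omega_one fun b => (isSuccLimit_omega 1).succ_lt (ih b b.2)

theorem exists_rel_rank_eq [IsTrans V r] {a : V} {o : Ordinal} (ho : o < rank r a) :
    ∃ b, r b a ∧ rank r b = o := by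
  induction a using IsWellFounded.induction r with
  | ind a ih =>
    rw [rank_eq, Ordinal.lt_iSup_iff] at ho
    obtain ⟨⟨b, hba⟩, ho⟩ := ho
    obtain rfl | ho := (Order.lt_succ_iff.mp ho).eq_or_lt
    · exact ⟨b, hba, rfl⟩
    · obtain ⟨c, hcb, rfl⟩ := ih b hba ho
      exact ⟨c, _root_.trans hcb hba, rfl⟩

theorem injOn_rank_of_isChain {s : Set V} (hs : IsChain r s) : s.InjOn (rank r) := by
  intro a ha b hb hab
  by_contra hne
  rcases hs ha hb hne with h | h
  · exact (rank_lt_of_rel h).ne hab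
  · exact (rank_lt_of_rel h).ne' hab

variable (r) in
/-- The vertex of rank `o` on the branch ending at `a` (junk value `a` if there is none). -/
noncomputable def ancestorAtRank (a : V) (o : Ordinal) : V :=
  open Classical in
  if h : ∃ b ∈ insert a {b | r b a}, rank r b = o then h.choose else a

variable (hram : ∀ a, IsChain r {b | r b a})
include hram

theorem ancestorAtRank_rank {a b : V} (hb : b ∈ insert a {c | r c a}) :
    ancestorAtRank r a (rank r b) = b := by
  have h : ∃ c ∈ insert a {c | r c a}, rank r c = rank r b := ⟨b, hb, rfl⟩
  rw [ancestorAtRank, dif_pos h]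
  exact injOn_rank_of_isChain ((hram a).insert fun _ hc _ => Or.inr hc)
    h.choose_spec.1 hb h.choose_spec.2

theorem ancestorAtRank_eq_of_rel [IsTrans V r] {a b : V} (hba : r b a) {o : Ordinal}
    (ho : o ≤ rank r b) : ancestorAtRank r b o = ancestorAtRank r a o := by
  obtain ⟨c, hcb, rfl⟩ : ∃ c ∈ insert b {c | r c b}, rank r c = o := by
    rcases ho.eq_or_lt with rfl | ho
    · exact ⟨b, Set.mem_insert _ _, rfl⟩
    · obtain ⟨c, hcb, rfl⟩ := exists_rel_rank_eq ho
      exact ⟨c, Or.inr hcb, rfl⟩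
  have hca : c ∈ insert a {c | r c a} := by
    rcases hcb with rfl | hcb
    exacts [Or.inr hba, Or.inr (_root_.trans hcb hba)]
  rw [ancestorAtRank_rank hram hcb, ancestorAtRank_rank hram hca]

end IsWellFounded

open IsWellFounded

/-- If `G` is a graph whose adjacent vertices are comparable in a well-founded
ramified strict partial order `◁` with countable sets of strict predecessors
(a tree of height at most `ω₁`), and Player II has a winning strategy `σ` in the
coloring game `𝔾_χ(G)` of length `ω₁` (in round `α` Player I plays a vertex `v_α`,
Player II answers with a natural number `c_α`, and Player II wins provided
`c_α ≠ c_β` whenever `α < β` and `v_α` is adjacent to `v_β`), then `χ(G) ≤ ℵ₀`. -/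
theorem winning_strategy_ctbl_chromatic {V : Type u} (G : SimpleGraph V)
    (lt : V → V → Prop)
    (hso : IsStrictOrder V lt)
    (hwf : WellFounded lt)
    (hram : ∀ v u w : V, lt u v → lt w v → (lt u w ∨ u = w ∨ lt w u))
    (hctbl : ∀ v : V, {u : V | lt u v}.Countable)
    (hadj : ∀ u v : V, G.Adj u v → (lt u v ∨ lt v u))
    (σ : (η : OrdBelowOmega1.{u}) → ({α : OrdBelowOmega1.{u} // α.1 ≤ η.1} → V) → ℕ)
    (hσ : ∀ v : OrdBelowOmega1.{u} → V, ∀ α β : OrdBelowOmega1.{u},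
      α.1 < β.1 → G.Adj (v α) (v β) →
        σ α (fun γ => v γ.1) ≠ σ β (fun γ => v γ.1)) :
    ∃ c : V → ℕ, ∀ u v : V, G.Adj u v → c u ≠ c v := by
  have : IsWellFounded V lt := ⟨hwf⟩
  have hchain : ∀ v, IsChain lt {u | lt u v} := fun v u hu w hw hne =>
    (hram v u w hu hw).imp_right (Or.resolve_left · hne)
  let η (v : V) : OrdBelowOmega1.{u} := ⟨rank lt v, rank_lt_aleph_one_ord hctbl v⟩
  let c (v : V) : ℕ := σ (η v) fun γ => ancestorAtRank lt v γ.1.1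
  have hc : ∀ u v, G.Adj u v → lt u v → c u ≠ c v := by
    intro u v huv hlt
    have hplay : G.Adj (ancestorAtRank lt v (η u).1) (ancestorAtRank lt v (η v).1) := by
      rwa [ancestorAtRank_rank hchain (Or.inr hlt),
        ancestorAtRank_rank hchain (Set.mem_insert v _)]
    convert hσ (fun γ => ancestorAtRank lt v γ.1) (η u) (η v) (rank_lt_of_rel hlt) hplay
      using 2
    funext γ
    exact ancestorAtRank_eq_of_rel hchain hlt γ.2
  refine ⟨c, fun u v huv => ?_⟩
  rcases hadj u v huv with hlt | hlt
  exacts [hc u v huv hlt, (hc v u huv.symm hlt).symm]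
end
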